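/- arXiv:math/0511300 — 9 statements merged into one kernel-verified Lean document; each statement's English description precedes it below -/
import Mathlib

section
/- Let G be a group acting linearly on finite-dimensional k-vector spaces W and V. Given points v = (w, v₁, …, v_m) and v' = (w', v₁', …, v_m') in W ⊕ V^m, whether they can be separated by a G-invariant polynomial function on W ⊕ V^m depends only on the triple (w, w', Span_k{v₁ ⊕ v₁', …, v_m ⊕ v_m'}) ∈ W × W × Gr(V ⊕ V). More precisely: if u = (w, u₁, …, u_d) and u' = (w', u₁', …, u_d') in W ⊕ V^d satisfy Span_k{v_i ⊕ v_i' : i ≤ m} = Span_k{u_j ⊕ u_j' : j ≤ d}, then v, v' can be separated by a G-invariant polynomial if and only if u, u' can. -/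
open scoped Pointwise

/-- A function `f : U → k` is a polynomial function if it lies in the `k`-subalgebra of
`U → k` generated by the linear functionals on `U`. -/
def IsPolyFun (k : Type) [Field k] {U : Type} [AddCommGroup U] [Module k U]
    (f : U → k) : Prop :=
  f ∈ Algebra.adjoin k (Set.range fun φ : U →ₗ[k] k => ⇑φ)

/-- Two points of a `G`-module `U` can be separated by polynomial invariants. -/
def CanSep (k G : Type) [Field k] [Group G] {U : Type} [AddCommGroup U] [Module k U]
    [MulAction G U] (a b : U) : Prop :=
  ∃ f : U → k, IsPolyFun k f ∧ (∀ (g : G) (x : U), f (g • x) = f x) ∧ f a ≠ f b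

/-!
If `Span{uⱼ ⊕ uⱼ'} ⊆ Span{vᵢ ⊕ vᵢ'}`, write `(uⱼ, uⱼ') = ∑ᵢ cⱼᵢ (vᵢ, vᵢ')`. The matrix `c`
defines a `G`-equivariant linear map `L : V^m → V^d` with `L v = u` and `L v' = u'`, because
`G` commutes with scalars. Pulling back a separating invariant for `(w, u), (w', u')` along
`id × L` gives a separating invariant for `(w, v), (w', v')`.
-/

section PolyFun

variable {k : Type} [Field k] {U U' : Type} [AddCommGroup U] [Module k U]
  [AddCommGroup U'] [Module k U']

lemma IsPolyFun.comp {f : U' → k} (hf : IsPolyFun k f) (T : U →ₗ[k] U') :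
    IsPolyFun k (f ∘ T) := by
  let precomp : (U' → k) →ₐ[k] (U → k) :=
    AlgHom.pi fun x => Pi.evalAlgHom k (fun _ : U' => k) (T x)
  have hmem : f ∘ T ∈ (Algebra.adjoin k (Set.range fun φ : U' →ₗ[k] k => ⇑φ)).map precomp :=
    Subalgebra.mem_map.2 ⟨f, hf, rfl⟩
  rw [AlgHom.map_adjoin] at hmem
  refine Algebra.adjoin_mono ?_ hmem
  rintro _ ⟨_, ⟨φ, rfl⟩, rfl⟩
  exact ⟨φ ∘ₗ T, rfl⟩

lemma CanSep.of_map {G : Type} [Group G] [MulAction G U] [MulAction G U'] (T : U →ₗ[k] U')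
    (hT : ∀ (g : G) (x : U), T (g • x) = g • T x) {a b : U} (h : CanSep k G (T a) (T b)) :
    CanSep k G a b := by
  obtain ⟨f, hpoly, hinv, hsep⟩ := h
  exact ⟨f ∘ T, hpoly.comp T, fun g x => by simp only [Function.comp_apply, hT, hinv], hsep⟩

end PolyFun

section Span

variable {k G V : Type} [Field k] [Group G] [AddCommGroup V] [Module k V]
  [DistribMulAction G V] [SMulCommClass G k V] {ι κ : Type}

lemma exists_equivariant_linearMap_of_span_le [Fintype ι] {v v' : ι → V} {u u' : κ → V}
    (hle : Submodule.span k (Set.range fun j => (u j, u' j)) ≤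
      Submodule.span k (Set.range fun i => (v i, v' i))) :
    ∃ L : (ι → V) →ₗ[k] (κ → V), (∀ (g : G) x, L (g • x) = g • L x) ∧ L v = u ∧ L v' = u' := by
  have hc (j : κ) : ∃ c : ι → k, ∑ i, c i • (v i, v' i) = (u j, u' j) :=
    Submodule.mem_span_range_iff_exists_fun k |>.1 (hle (Submodule.subset_span ⟨j, rfl⟩))
  choose c hc using hc
  let L : (ι → V) →ₗ[k] (κ → V) := LinearMap.pi fun j => ∑ i, c j i • LinearMap.proj i
  have hL (x : ι → V) (j : κ) : L x j = ∑ i, c j i • x i := by simp [L]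
  refine ⟨L, fun g x => funext fun j => ?_, funext fun j => ?_, funext fun j => ?_⟩
  · simp only [hL, Pi.smul_apply, Finset.smul_sum, smul_comm g]
  · simpa [hL, Prod.fst_sum] using congrArg Prod.fst (hc j)
  · simpa [hL, Prod.snd_sum] using congrArg Prod.snd (hc j)

lemma CanSep.of_span_le {W : Type} [AddCommGroup W] [Module k W] [DistribMulAction G W]
    [Fintype ι] {w w' : W} {v v' : ι → V} {u u' : κ → V}
    (hle : Submodule.span k (Set.range fun j => (u j, u' j)) ≤
      Submodule.span k (Set.range fun i => (v i, v' i)))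
    (h : CanSep k G ((w, u) : W × (κ → V)) (w', u')) :
    CanSep k G ((w, v) : W × (ι → V)) (w', v') := by
  obtain ⟨L, hLG, hLv, hLv'⟩ := exists_equivariant_linearMap_of_span_le (G := G) hle
  refine CanSep.of_map (LinearMap.id.prodMap L) (fun g x => ?_) ?_
  · simp [hLG]
  · simpa [hLv, hLv'] using h

end Span

theorem separation_depends_only_on_span_general
    {k G W V : Type} [Field k] [Group G]
    [AddCommGroup W] [Module k W]
    [AddCommGroup V] [Module k V]
    [DistribMulAction G W]
    [DistribMulAction G V] [SMulCommClass G k V]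
    {m d : ℕ} (w w' : W) (v v' : Fin m → V) (u u' : Fin d → V)
    (hspan : Submodule.span k (Set.range fun i => (v i, v' i)) =
      Submodule.span k (Set.range fun j => (u j, u' j))) :
    CanSep k G ((w, v) : W × (Fin m → V)) (w', v') ↔
      CanSep k G ((w, u) : W × (Fin d → V)) (w', u') :=
  ⟨CanSep.of_span_le hspan.le, CanSep.of_span_le hspan.ge⟩

/-- Whether `v = (w, v₁, …, v_m)` and `v' = (w', v₁', …, v_m')` can be separated by
polynomial invariants depends only on `(w, w', Span{v_i ⊕ v_i'})`. -/
theorem separation_depends_only_on_span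
    {k G W V : Type} [Field k] [Group G]
    [AddCommGroup W] [Module k W] [FiniteDimensional k W]
    [AddCommGroup V] [Module k V] [FiniteDimensional k V]
    [DistribMulAction G W] [SMulCommClass G k W]
    [DistribMulAction G V] [SMulCommClass G k V]
    {m d : ℕ} (w w' : W) (v v' : Fin m → V) (u u' : Fin d → V)
    (hspan : Submodule.span k (Set.range fun i => (v i, v' i)) =
      Submodule.span k (Set.range fun j => (u j, u' j))) :
    CanSep k G ((w, v) : W × (Fin m → V)) (w', v') ↔
      CanSep k G ((w, u) : W × (Fin d → V)) (w', u') :=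
  separation_depends_only_on_span_general w w' v v' u u' hspan
end

section
/- Let G be an algebraic group acting linearly on finite-dimensional spaces W, V over an algebraically closed field k, and let v = (w, v₁, …, v_m) ∈ W ⊕ V^m. Suppose for some q ≤ m that Span_k{v₁, …, v_q} = Span_k{v₁, …, v_m}. Then the G-orbit of v is Zariski-closed in W ⊕ V^m if and only if the G-orbit of (w, v₁, …, v_q) is Zariski-closed in W ⊕ V^q. -/
open scoped Pointwise

/-- A subset of a finite-dimensional `k`-vector space is Zariski closed if it is the
common zero locus of a family of polynomial functions. -/
def ZarClosed (k : Type) [Field k] {U : Type} [AddCommGroup U] [Module k U]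
    (S : Set U) : Prop :=
  ∃ T : Set (U → k), (∀ f ∈ T, IsPolyFun k f) ∧ S = {x | ∀ f ∈ T, f x = 0}

section Zariski

variable {k U U' : Type} [Field k] [AddCommGroup U] [Module k U] [AddCommGroup U'] [Module k U']

theorem IsPolyFun.comp_linearMap {f : U' → k} (hf : IsPolyFun k f) (L : U →ₗ[k] U') :
    IsPolyFun k (f ∘ L) := by
  let precomp : (U' → k) →ₐ[k] (U → k) := AlgHom.pi fun x => Pi.evalAlgHom k (fun _ => k) (L x)
  have hmap : precomp f ∈ (Algebra.adjoin k (Set.range fun φ : U' →ₗ[k] k => ⇑φ)).map precomp :=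
    Subalgebra.mem_map.2 ⟨f, hf, rfl⟩
  rw [AlgHom.map_adjoin] at hmap
  refine Algebra.adjoin_mono ?_ hmap
  rintro _ ⟨_, ⟨φ, rfl⟩, rfl⟩
  exact ⟨φ ∘ₗ L, rfl⟩

theorem ZarClosed.preimage_linearMap {S : Set U'} (hS : ZarClosed k S) (L : U →ₗ[k] U') :
    ZarClosed k (L ⁻¹' S) := by
  obtain ⟨T, hT, rfl⟩ := hS
  refine ⟨(· ∘ L) '' T, ?_, ?_⟩
  · rintro _ ⟨f, hf, rfl⟩
    exact (hT f hf).comp_linearMap L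
  · ext x
    simp

theorem ZarClosed.inter {S S' : Set U} (hS : ZarClosed k S) (hS' : ZarClosed k S') :
    ZarClosed k (S ∩ S') := by
  obtain ⟨T, hT, rfl⟩ := hS
  obtain ⟨T', hT', rfl⟩ := hS'
  refine ⟨T ∪ T', fun f hf => hf.elim (hT f) (hT' f), ?_⟩
  ext x
  simp only [Set.mem_inter_iff, Set.mem_ofPred_eq, Set.mem_union, or_imp, forall_and]

theorem Submodule.zarClosed (p : Submodule k U) : ZarClosed k (p : Set U) := by
  refine ⟨(⇑) '' {φ : Module.Dual k U | p.map φ = ⊥}, ?_, ?_⟩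
  · rintro _ ⟨φ, -, rfl⟩
    exact Algebra.subset_adjoin ⟨φ, rfl⟩
  · ext x
    simp only [SetLike.mem_coe, Set.mem_ofPred_eq, Set.forall_mem_image]
    refine ⟨fun hx φ hφ => ?_, fun h => ?_⟩
    · exact LinearMap.mem_ker.1 (LinearMap.le_ker_iff_map.2 hφ hx)
    · by_contra hx
      obtain ⟨φ, hφx, hφ⟩ := p.exists_dual_map_eq_bot_of_notMem hx inferInstance
      exact hφx (h hφ)

theorem ZarClosed.image_linearMap_iff {L : U →ₗ[k] U'} (hL : Function.Injective L) {S : Set U} :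
    ZarClosed k (L '' S) ↔ ZarClosed k S := by
  obtain ⟨π, hπ⟩ := L.exists_leftInverse_of_injective (LinearMap.ker_eq_bot.2 hL)
  have hπL : ∀ x, π (L x) = x := LinearMap.congr_fun hπ
  refine ⟨fun h => ?_, fun h => ?_⟩
  · simpa only [hL.preimage_image] using h.preimage_linearMap L
  · have hImage : L '' S = π ⁻¹' S ∩ LinearMap.range L := by
      ext y
      constructor
      · rintro ⟨x, hx, rfl⟩
        exact ⟨by simpa [hπL] using hx, x, rfl⟩
      · rintro ⟨hy, x, rfl⟩
        exact ⟨x, by simpa [hπL] using hy, rfl⟩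
    rw [hImage]
    exact (h.preimage_linearMap π).inter (LinearMap.range L).zarClosed

end Zariski

theorem MulAction.image_orbit_of_map_smul {G X Y : Type*} [Monoid G] [MulAction G X]
    [MulAction G Y]
    {f : X → Y} (hf : ∀ (g : G) x, f (g • x) = g • f x) (x : X) :
    f '' MulAction.orbit G x = MulAction.orbit G (f x) := by
  simp only [MulAction.orbit, ← Set.range_comp, Function.comp_def, hf]

section Combination

variable {k V : Type} [Field k] [AddCommGroup V] [Module k V] {ι ι' : Type} [Fintype ι']

def linearCombinations (C : ι → ι' → k) : (ι' → V) →ₗ[k] (ι → V) where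
  toFun x j := ∑ i, C j i • x i
  map_add' x y := by
    funext j
    simp only [Pi.add_apply, smul_add, Finset.sum_add_distrib]
  map_smul' c x := by
    funext j
    simp only [Pi.smul_apply, RingHom.id_apply, Finset.smul_sum, smul_comm c]

theorem linearCombinations_apply (C : ι → ι' → k) (x : ι' → V) (j : ι) :
    linearCombinations C x j = ∑ i, C j i • x i :=
  rfl

theorem linearCombinations_smul {G : Type} [Monoid G] [DistribMulAction G V] [SMulCommClass G k V]
    (C : ι → ι' → k) (g : G) (x : ι' → V) :
    linearCombinations C (g • x) = g • linearCombinations C x := by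
  funext j
  simp only [linearCombinations_apply, Pi.smul_apply, Finset.smul_sum, smul_comm g]

theorem linearCombinations_injective [DecidableEq ι'] {e : ι' → ι} {C : ι → ι' → k}
    (hC : ∀ i, C (e i) = Pi.single i 1) :
    Function.Injective (linearCombinations C : (ι' → V) →ₗ[k] (ι → V)) := by
  refine Function.LeftInverse.injective (g := fun y => y ∘ e) fun x => ?_
  funext i
  simp [linearCombinations_apply, hC, Pi.single_apply]

theorem exists_linearCombinations_eq_of_span_eq [DecidableEq ι'] {e : ι' → ι}
    (he : Function.Injective e) {v : ι → V}
    (hspan : Submodule.span k (Set.range (v ∘ e)) = Submodule.span k (Set.range v)) :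
    ∃ C : ι → ι' → k, (∀ i, C (e i) = Pi.single i 1) ∧ linearCombinations C (v ∘ e) = v := by
  have hcoeff : ∀ j, ∃ c : ι' → k, ∑ i, c i • v (e i) = v j := fun j =>
    (Submodule.mem_span_range_iff_exists_fun k).1 (hspan ▸ Submodule.subset_span ⟨j, rfl⟩)
  choose c hc using hcoeff
  refine ⟨Function.extend e (fun i => Pi.single i 1) c, fun i => he.extend_apply _ _ i, ?_⟩
  funext j
  rw [linearCombinations_apply]
  by_cases hj : ∃ i, e i = j
  · obtain ⟨i, rfl⟩ := hj
    simp [he.extend_apply, Pi.single_apply]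
  · simp only [Function.extend_apply' _ _ _ hj, Function.comp_apply, hc]

end Combination

theorem orbit_closed_iff_truncated_orbit_closed_general
    {k G W V : Type} [Field k] [Group G]
    [AddCommGroup W] [Module k W]
    [AddCommGroup V] [Module k V]
    [DistribMulAction G W] [SMulCommClass G k W]
    [DistribMulAction G V] [SMulCommClass G k V]
    {m q : ℕ} (hq : q ≤ m) (w : W) (v : Fin m → V)
    (hspan : Submodule.span k (Set.range fun i : Fin q => v (Fin.castLE hq i)) =
      Submodule.span k (Set.range v)) :
    ZarClosed k (MulAction.orbit G ((w, v) : W × (Fin m → V))) ↔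
      ZarClosed k (MulAction.orbit G ((w, fun i : Fin q => v (Fin.castLE hq i)) :
        W × (Fin q → V))) := by
  obtain ⟨C, hC_single, hCv⟩ :=
    exists_linearCombinations_eq_of_span_eq (Fin.castLE_injective hq) hspan
  let L := (LinearMap.id : W →ₗ[k] W).prodMap
    (linearCombinations C : (Fin q → V) →ₗ[k] (Fin m → V))
  have hL_inj : Function.Injective L :=
    Function.injective_id.prodMap (linearCombinations_injective hC_single)
  have hL_smul (g : G) (x : W × (Fin q → V)) : L (g • x) = g • L x :=
    Prod.ext rfl (linearCombinations_smul C g x.2)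
  have hLv : L (w, fun i => v (Fin.castLE hq i)) = (w, v) := Prod.ext rfl hCv
  rw [← hLv, ← MulAction.image_orbit_of_map_smul hL_smul, ZarClosed.image_linearMap_iff hL_inj]

/-- If `Span{v₁,…,v_q} = Span{v₁,…,v_m}`, then the `G`-orbit of `(w,v₁,…,v_m)` is
Zariski closed in `W ⊕ V^m` iff the `G`-orbit of `(w,v₁,…,v_q)` is Zariski closed in
`W ⊕ V^q`. -/
theorem orbit_closed_iff_truncated_orbit_closed
    {k G W V : Type} [Field k] [IsAlgClosed k] [Group G]
    [AddCommGroup W] [Module k W] [FiniteDimensional k W]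
    [AddCommGroup V] [Module k V] [FiniteDimensional k V]
    [DistribMulAction G W] [SMulCommClass G k W]
    [DistribMulAction G V] [SMulCommClass G k V]
    {m q : ℕ} (hq : q ≤ m) (w : W) (v : Fin m → V)
    (hspan : Submodule.span k (Set.range fun i : Fin q => v (Fin.castLE hq i)) =
      Submodule.span k (Set.range v)) :
    ZarClosed k (MulAction.orbit G ((w, v) : W × (Fin m → V))) ↔
      ZarClosed k (MulAction.orbit G ((w, fun i : Fin q => v (Fin.castLE hq i)) :
        W × (Fin q → V))) :=
  orbit_closed_iff_truncated_orbit_closed_general hq w v hspan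
end

section
/- For any group G, the Helly dimension satisfies κ(G) ≤ μ(G) + 1, where μ(G) is the maximal size of an intersection independent set of subgroups of G. That is, if any μ(G)+1 of a given finite family of left cosets of subgroups of G have a common element, then all cosets in the family have a common element. -/
open scoped Pointwise

/-- A finite set of subgroups is intersection independent if no member contains the
intersection of the others. -/
def InterIndep {G : Type} [Group G] (S : Finset (Subgroup G)) : Prop :=
  ∀ H ∈ S, ¬ ((⨅ K ∈ (S : Set (Subgroup G)) \ {H}, K) ≤ H)

/-- Helly dimension bound `κ(G) ≤ μ(G) + 1`: if `μ` bounds the size of every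
intersection independent set of subgroups of `G`, and every `μ + 1` members of a finite
family of left cosets have a common element, then the whole family has a common element. -/
theorem helly_le_mu_add_one {G : Type} [Group G] (μ : ℕ)
    (hμ : ∀ S : Finset (Subgroup G), InterIndep S → S.card ≤ μ)
    {ι : Type} [Fintype ι] (g : ι → G) (H : ι → Subgroup G)
    (h : ∀ s : Finset ι, s.card ≤ μ + 1 → (⋂ i ∈ s, g i • (H i : Set G)).Nonempty) :
    (⋂ i, g i • (H i : Set G)).Nonempty := by
  classical
  set N := ⨅ i, H i with hN
  have hPuniv : (⨅ i ∈ (Finset.univ : Finset ι), H i) = N := by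
    simp [hN]
  obtain ⟨T, hTmem, hTmin⟩ := Finset.exists_min_image
    (Finset.univ.filter (fun T : Finset ι => (⨅ i ∈ T, H i) = N)) Finset.card
    ⟨Finset.univ, by simp [hPuniv]; exact hN.symm⟩
  have hT : (⨅ i ∈ T, H i) = N := (Finset.mem_filter.mp hTmem).2
  have hmin : ∀ T' : Finset ι, (⨅ i ∈ T', H i) = N → T.card ≤ T'.card := fun T' hT' =>
    hTmin T' (Finset.mem_filter.mpr ⟨Finset.mem_univ _, hT'⟩)
  have key : ∀ i ∈ T, ¬ ((⨅ j ∈ T.erase i, H j) ≤ H i) := by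
    intro i hi hle
    have heq : (⨅ j ∈ T, H j) = (⨅ j ∈ T.erase i, H j) := by
      conv_lhs => rw [← Finset.insert_erase hi]
      rw [Finset.iInf_insert]
      exact inf_eq_right.mpr hle
    have h1 := hmin (T.erase i) (heq.symm.trans hT)
    have h2 := Finset.card_erase_lt_of_mem hi
    omega
  have hinj : Set.InjOn H (T : Set ι) := by
    intro i hi j hj hij
    by_contra hne
    apply key j hj
    have : i ∈ T.erase j := Finset.mem_erase.mpr ⟨hne, hi⟩
    calc (⨅ k ∈ T.erase j, H k) ≤ H i := iInf₂_le i this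
      _ = H j := hij
  have hindep : InterIndep (T.image H) := by
    intro K hK
    obtain ⟨i, hi, rfl⟩ := Finset.mem_image.mp hK
    intro hle
    apply key i hi
    refine le_trans (le_iInf₂ ?_) hle
    rintro L ⟨hLS, hLne⟩
    obtain ⟨j, hj, rfl⟩ := Finset.mem_image.mp (Finset.mem_coe.mp hLS)
    have hji : j ≠ i := fun e => hLne (by rw [e]; rfl)
    exact iInf₂_le j (Finset.mem_erase.mpr ⟨hji, hj⟩)
  have hcard : T.card ≤ μ := by
    have := hμ (T.image H) hindep
    rwa [Finset.card_image_of_injOn hinj] at this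
  obtain ⟨x, hx⟩ := h T (by omega)
  have hxT : ∀ i ∈ T, (g i)⁻¹ * x ∈ H i := fun i hi =>
    (mem_leftCoset_iff (g i)).mp (Set.mem_iInter₂.mp hx i hi)
  refine ⟨x, Set.mem_iInter.mpr fun j => ?_⟩
  obtain ⟨y, hy⟩ := h (insert j T)
    (le_trans (Finset.card_insert_le _ _) (by omega))
  have hyj : (g j)⁻¹ * y ∈ H j :=
    (mem_leftCoset_iff (g j)).mp (Set.mem_iInter₂.mp hy j (Finset.mem_insert_self _ _))
  have hyT : ∀ i ∈ T, (g i)⁻¹ * y ∈ H i := fun i hi =>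
    (mem_leftCoset_iff (g i)).mp
      (Set.mem_iInter₂.mp hy i (Finset.mem_insert_of_mem hi))
  have hxyN : x⁻¹ * y ∈ N := by
    rw [← hT]
    simp only [Subgroup.mem_iInf]
    intro i hi
    have e : x⁻¹ * y = ((g i)⁻¹ * x)⁻¹ * ((g i)⁻¹ * y) := by group
    rw [e]
    exact mul_mem (inv_mem (hxT i hi)) (hyT i hi)
  have hNle : N ≤ H j := hN ▸ iInf_le H j
  refine (mem_leftCoset_iff (g j)).mpr ?_
  have e : (g j)⁻¹ * x = ((g j)⁻¹ * y) * (x⁻¹ * y)⁻¹ := by group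
  rw [e]
  exact mul_mem hyj (inv_mem (hNle hxyN))
end

section
/- For any finite group G, μ(G) ≤ λ(G), where μ(G) is the maximal size of an intersection independent set of subgroups and λ(G) is the maximal length of a strictly descending chain of proper subgroups of G. -/
/-- `μ(G) ≤ λ(G)` for a finite group: any intersection independent set of subgroups of
size `r` gives rise to a strictly descending chain of `r` proper subgroups. -/
theorem mu_le_lambda {G : Type} [Group G] [Finite G]
    (S : Finset (Subgroup G)) (hS : InterIndep S) :
    ∃ c : Fin S.card → Subgroup G, StrictAnti c ∧ ∀ i, c i ≠ ⊤ := by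
  classical
  have hlen : S.toList.length = S.card := S.length_toList
  set f : Fin S.card → Subgroup G :=
    fun i => S.toList.get (Fin.cast hlen.symm i) with hf
  have hmem : ∀ i, f i ∈ S := fun i => by
    rw [← Finset.mem_toList]; exact List.get_mem _ _
  have hinj : Function.Injective f := by
    intro a b hab
    have h2 := (List.nodup_iff_injective_get.mp S.nodup_toList) hab
    apply Fin.ext
    simpa [Fin.ext_iff] using h2
  set c : Fin S.card → Subgroup G :=
    fun i => ⨅ j, ⨅ _ : j ≤ i, f j with hc
  have hlef : ∀ i j : Fin S.card, j ≤ i → c i ≤ f j := by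
    intro i j hj
    exact iInf_le_of_le j (iInf_le _ hj)
  have hanti : Antitone c := by
    intro i k h
    refine le_iInf fun j => le_iInf fun hj => ?_
    exact hlef k j (le_trans hj h)
  refine ⟨c, ?_, ?_⟩
  · intro i k hik
    refine lt_of_le_of_ne (hanti hik.le) ?_
    intro heq
    have hjlt : (i : ℕ) + 1 < S.card := lt_of_le_of_lt (Nat.succ_le_of_lt hik) k.isLt
    set j : Fin S.card := ⟨(i : ℕ) + 1, hjlt⟩ with hj
    have hjk : j ≤ k := by
      simpa [Fin.le_def, hj] using Nat.succ_le_of_lt hik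
    have h1 : c i ≤ f j := heq ▸ hlef k j hjk
    refine hS (f j) (hmem j) (le_trans ?_ h1)
    refine le_iInf fun j' => le_iInf fun hj' => ?_
    have hne : f j' ≠ f j := by
      intro h
      have h3 : (j' : ℕ) = (i : ℕ) + 1 := congrArg Fin.val (hinj h)
      have h4 : (j' : ℕ) ≤ (i : ℕ) := hj'
      omega
    exact iInf_le_of_le (f j') (iInf_le _ ⟨hmem j', by simpa using hne⟩)
  · intro i htop
    refine hS (f i) (hmem i) ?_
    have h5 : f i = ⊤ := top_le_iff.mp (htop ▸ hlef i i le_rfl)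
    rw [h5]; exact le_top
end

section
/- For a cyclic group C_n of order n > 1, the Helly dimension equals 2: given any finite family of left cosets of subgroups of C_n such that every pair of cosets has non-empty intersection, the whole family has a common element; moreover κ(C_n) ≥ 2. -/
open scoped Pointwise
open Subgroup

lemma myNat_gcd_lcm_distrib_dvd {a b c : ℕ} (ha : a ≠ 0) (hb : b ≠ 0) (hc : c ≠ 0) :
    Nat.gcd a (Nat.lcm b c) ∣ Nat.lcm (Nat.gcd a b) (Nat.gcd a c) := by
  have hbc : Nat.lcm b c ≠ 0 := Nat.lcm_ne_zero hb hc
  have hab : Nat.gcd a b ≠ 0 := fun h => ha (Nat.eq_zero_of_gcd_eq_zero_left h)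
  have hac : Nat.gcd a c ≠ 0 := fun h => ha (Nat.eq_zero_of_gcd_eq_zero_left h)
  have h1 : Nat.gcd a (Nat.lcm b c) ≠ 0 := fun h => ha (Nat.eq_zero_of_gcd_eq_zero_left h)
  have h2 : Nat.lcm (Nat.gcd a b) (Nat.gcd a c) ≠ 0 := Nat.lcm_ne_zero hab hac
  rw [← Nat.factorization_le_iff_dvd h1 h2, Nat.factorization_gcd ha hbc,
    Nat.factorization_lcm hb hc, Nat.factorization_lcm hab hac,
    Nat.factorization_gcd ha hb, Nat.factorization_gcd ha hc]
  intro p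
  simp only [Finsupp.inf_apply, Finsupp.sup_apply]
  exact le_of_eq (min_max_distrib_left ..)

section Cyclic
variable {G : Type} [Group G] [Fintype G] [IsCyclic G]

lemma my_mem_of_pow_card_eq_one (K : Subgroup G) {x : G}
    (hx : x ^ Nat.card K = 1) : x ∈ K := by
  classical
  have hpos : 0 < Nat.card K := Nat.card_pos
  have hle := IsCyclic.card_pow_eq_one_le (α := G) hpos
  have hsub : (K : Set G).toFinset ⊆ Finset.filter (fun a : G => a ^ Nat.card K = 1) Finset.univ := by
    intro y hy
    rw [Set.mem_toFinset] at hy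
    have h2 : (⟨y, hy⟩ : K) ^ Nat.card K = 1 := pow_card_eq_one'
    have hy1 : y ^ Nat.card K = 1 := by
      have h3 := congrArg (Subtype.val) h2
      rwa [SubmonoidClass.coe_pow] at h3
    exact Finset.mem_filter.2 ⟨Finset.mem_univ y, hy1⟩
  have hcard : (K : Set G).toFinset.card = Nat.card K := by
    simp [Set.toFinset_card, Nat.card_eq_fintype_card]
  have heq := Finset.eq_of_subset_of_card_le hsub (hle.trans (le_of_eq hcard.symm))
  have : x ∈ (Finset.filter (fun a : G => a ^ Nat.card K = 1) Finset.univ) :=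
    Finset.mem_filter.2 ⟨Finset.mem_univ x, hx⟩
  rw [← heq, Set.mem_toFinset] at this
  exact this


lemma my_le_iff_card_dvd (H K : Subgroup G) : H ≤ K ↔ Nat.card H ∣ Nat.card K := by
  refine ⟨Subgroup.card_dvd_of_le, fun ⟨m, hm⟩ x hx => my_mem_of_pow_card_eq_one K ?_⟩
  have h1 : x ^ Nat.card H = 1 := by
    have h2 : (⟨x, hx⟩ : H) ^ Nat.card H = 1 := pow_card_eq_one'
    have h3 := congrArg (Subtype.val) h2
    rwa [SubmonoidClass.coe_pow] at h3
  rw [hm, pow_mul, h1, one_pow]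

lemma my_exists_subgroup_card {d : ℕ} (hd : d ∣ Nat.card G) (hd0 : d ≠ 0) :
    ∃ Z : Subgroup G, Nat.card Z = d := by
  obtain ⟨g, hg⟩ := IsCyclic.exists_ofOrder_eq_natCard (α := G)
  obtain ⟨m, hm⟩ := hd
  have hn0 : Nat.card G ≠ 0 := Nat.card_pos.ne'
  have hm0 : m ≠ 0 := fun h => hn0 (by rw [hm, h, Nat.mul_zero])
  refine ⟨Subgroup.zpowers (g ^ m), ?_⟩
  rw [Nat.card_zpowers, orderOf_pow, hg]
  have hgcd : Nat.gcd (Nat.card G) m = m := Nat.gcd_eq_right ⟨d, by rw [hm, mul_comm]⟩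
  rw [hgcd, hm, Nat.mul_div_cancel d (Nat.pos_of_ne_zero hm0)]

lemma my_card_inf (H K : Subgroup G) :
    Nat.card (H ⊓ K : Subgroup G) = Nat.gcd (Nat.card H) (Nat.card K) := by
  refine Nat.dvd_antisymm (Nat.dvd_gcd ?_ ?_) ?_
  · exact Subgroup.card_dvd_of_le inf_le_left
  · exact Subgroup.card_dvd_of_le inf_le_right
  · have hgd : Nat.gcd (Nat.card H) (Nat.card K) ∣ Nat.card G :=
      (Nat.gcd_dvd_left _ _).trans (Subgroup.card_subgroup_dvd_card H)
    have hg0 : Nat.gcd (Nat.card H) (Nat.card K) ≠ 0 :=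
      fun h => (Nat.card_pos (α := H)).ne' (Nat.eq_zero_of_gcd_eq_zero_left h)
    obtain ⟨Z, hZ⟩ := my_exists_subgroup_card hgd hg0
    have hZle : Z ≤ H ⊓ K := le_inf
      ((my_le_iff_card_dvd Z H).2 (hZ ▸ Nat.gcd_dvd_left _ _))
      ((my_le_iff_card_dvd Z K).2 (hZ ▸ Nat.gcd_dvd_right _ _))
    exact hZ ▸ Subgroup.card_dvd_of_le hZle

lemma my_card_sup (H K : Subgroup G) :
    Nat.card (H ⊔ K : Subgroup G) = Nat.lcm (Nat.card H) (Nat.card K) := by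
  refine Nat.dvd_antisymm ?_ (Nat.lcm_dvd
    (Subgroup.card_dvd_of_le le_sup_left) (Subgroup.card_dvd_of_le le_sup_right))
  have hld : Nat.lcm (Nat.card H) (Nat.card K) ∣ Nat.card G :=
    Nat.lcm_dvd (Subgroup.card_subgroup_dvd_card H) (Subgroup.card_subgroup_dvd_card K)
  have hl0 : Nat.lcm (Nat.card H) (Nat.card K) ≠ 0 :=
    Nat.lcm_ne_zero (Nat.card_pos (α := H)).ne' (Nat.card_pos (α := K)).ne'
  obtain ⟨Z, hZ⟩ := my_exists_subgroup_card hld hl0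
  have hZle : H ⊔ K ≤ Z := sup_le
    ((my_le_iff_card_dvd H Z).2 (hZ ▸ Nat.dvd_lcm_left _ _))
    ((my_le_iff_card_dvd K Z).2 (hZ ▸ Nat.dvd_lcm_right _ _))
  exact hZ ▸ Subgroup.card_dvd_of_le hZle

lemma my_distrib (H K L : Subgroup G) : H ⊓ (K ⊔ L) ≤ (H ⊓ K) ⊔ (H ⊓ L) := by
  rw [my_le_iff_card_dvd, my_card_inf, my_card_sup, my_card_sup, my_card_inf, my_card_inf]
  exact myNat_gcd_lcm_distrib_dvd (Nat.card_pos (α := H)).ne'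
    (Nat.card_pos (α := K)).ne' (Nat.card_pos (α := L)).ne'

lemma my_mem_sup {A B : Subgroup G} {x : G} (h : x ∈ A ⊔ B) :
    ∃ a ∈ A, ∃ b ∈ B, a * b = x := by
  have hcomm : ∀ u v : G, u * v = v * u := fun u v => (IsCyclic.commGroup (α := G)).mul_comm u v
  let P : Subgroup G :=
  { carrier := {x | ∃ a ∈ A, ∃ b ∈ B, a * b = x}
    one_mem' := ⟨1, one_mem _, 1, one_mem _, one_mul 1⟩
    mul_mem' := by
      rintro u v ⟨a1, ha1, b1, hb1, rfl⟩ ⟨a2, ha2, b2, hb2, rfl⟩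
      exact ⟨a1 * a2, mul_mem ha1 ha2, b1 * b2, mul_mem hb1 hb2, by
        rw [mul_assoc, ← mul_assoc a2, hcomm a2 b1, mul_assoc, ← mul_assoc]⟩
    inv_mem' := by
      rintro u ⟨a, ha, b, hb, rfl⟩
      exact ⟨a⁻¹, inv_mem ha, b⁻¹, inv_mem hb, by
        rw [mul_inv_rev]; exact hcomm a⁻¹ b⁻¹⟩ }
  have hle : A ⊔ B ≤ P := sup_le (fun a ha => ⟨a, ha, 1, one_mem _, mul_one a⟩)
    (fun b hb => ⟨1, one_mem _, b, hb, one_mul b⟩)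
  exact hle h

lemma my_coset_inter {a b : G} {A B : Subgroup G} :
    (a • (A : Set G) ∩ b • (B : Set G)).Nonempty ↔ b⁻¹ * a ∈ A ⊔ B := by
  have hcomm : ∀ u v : G, u * v = v * u := fun u v => (IsCyclic.commGroup (α := G)).mul_comm u v
  constructor
  · rintro ⟨x, hxA, hxB⟩
    rw [mem_leftCoset_iff] at hxA hxB
    have hre : b⁻¹ * a = (b⁻¹ * x) * (a⁻¹ * x)⁻¹ := by group
    rw [hre]
    exact mul_mem (Subgroup.mem_sup_right hxB) (Subgroup.mem_sup_left (inv_mem hxA))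
  · intro h
    obtain ⟨α, hα, β, hβ, hαβ⟩ := my_mem_sup h
    refine ⟨a * α⁻¹, ?_, ?_⟩
    · rw [mem_leftCoset_iff]
      have : a⁻¹ * (a * α⁻¹) = α⁻¹ := by group
      rw [this]; exact inv_mem hα
    · rw [mem_leftCoset_iff]
      have : b⁻¹ * (a * α⁻¹) = β := by
        calc b⁻¹ * (a * α⁻¹) = (b⁻¹ * a) * α⁻¹ := (mul_assoc _ _ _).symm
          _ = (α * β) * α⁻¹ := by rw [hαβ]
          _ = (β * α) * α⁻¹ := by rw [hcomm α β]
          _ = β := by group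
      rw [this]; exact hβ

lemma my_coset_trans {c y z : G} {B C : Subgroup G} (h1 : y ∈ c • (B : Set G))
    (h2 : z ∈ y • (C : Set G)) (hCB : C ≤ B) : z ∈ c • (B : Set G) := by
  rw [mem_leftCoset_iff] at h1 h2 ⊢
  have hre : c⁻¹ * z = (c⁻¹ * y) * (y⁻¹ * z) := by group
  rw [hre]
  exact mul_mem h1 (hCB h2)

lemma my_helly_list : ∀ (m : ℕ) (l : List (G × Subgroup G)), l.length = m →
    (∀ p ∈ l, ∀ q ∈ l, (p.1 • (p.2 : Set G) ∩ q.1 • (q.2 : Set G)).Nonempty) →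
    ∃ x : G, ∀ p ∈ l, x ∈ p.1 • (p.2 : Set G) := by
  intro m
  induction m with
  | zero =>
    intro l hl _
    rw [List.length_eq_zero_iff] at hl
    subst hl
    exact ⟨1, fun p hp => absurd hp List.not_mem_nil⟩
  | succ n ih =>
    rintro (_ | ⟨⟨a, A⟩, t⟩) hl hp
    · simp at hl
    have hmemhd : ((a, A) : G × Subgroup G) ∈ (a, A) :: t := List.mem_cons_self
    have hchoice : ∀ p ∈ t, ∃ x, x ∈ a • (A : Set G) ∩ p.1 • (p.2 : Set G) :=
      fun p hp' => hp (a, A) hmemhd p (List.mem_cons_of_mem _ hp')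
    rcases t with _ | ⟨p0, t0⟩
    · refine ⟨a, ?_⟩
      rintro p hp'
      rcases List.mem_singleton.1 hp' with rfl
      rw [mem_leftCoset_iff, inv_mul_cancel]
      exact one_mem A
    set t : List (G × Subgroup G) := p0 :: t0 with ht
    classical
    let xc : ∀ p ∈ t, G := fun p hp' => Classical.choose (hchoice p hp')
    have hxc : ∀ p (hp' : p ∈ t),
        xc p hp' ∈ a • (A : Set G) ∩ p.1 • (p.2 : Set G) :=
      fun p hp' => Classical.choose_spec (hchoice p hp')
    let t' : List (G × Subgroup G) := t.pmap (fun p hp' => (xc p hp', A ⊓ p.2)) (fun _ h => h)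
    have hlen : t'.length = n := by
      have h0 : t.length = n := Nat.succ_injective hl
      simpa [t', List.length_pmap] using h0
    have hp' : ∀ q1 ∈ t', ∀ q2 ∈ t',
        (q1.1 • (q1.2 : Set G) ∩ q2.1 • (q2.2 : Set G)).Nonempty := by
      intro q1 hq1 q2 hq2
      rw [List.mem_pmap] at hq1 hq2
      obtain ⟨p, hpt, rfl⟩ := hq1
      obtain ⟨r, hrt, rfl⟩ := hq2
      rw [my_coset_inter]
      have hmem1 : (xc r hrt)⁻¹ * (xc p hpt) ∈ A := by
        have h1 := (mem_leftCoset_iff a).1 (hxc p hpt).1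
        have h2 := (mem_leftCoset_iff a).1 (hxc r hrt).1
        have hre : (xc r hrt)⁻¹ * (xc p hpt)
            = (a⁻¹ * xc r hrt)⁻¹ * (a⁻¹ * xc p hpt) := by group
        rw [hre]
        exact mul_mem (inv_mem h2) h1
      have hmem2 : (xc r hrt)⁻¹ * (xc p hpt) ∈ p.2 ⊔ r.2 := by
        have h1 := (mem_leftCoset_iff p.1).1 (hxc p hpt).2
        have h2 := (mem_leftCoset_iff r.1).1 (hxc r hrt).2
        have h3 : r.1⁻¹ * p.1 ∈ p.2 ⊔ r.2 := by
          rw [← my_coset_inter]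
          exact hp p (List.mem_cons_of_mem _ hpt) r (List.mem_cons_of_mem _ hrt)
        have hre : (xc r hrt)⁻¹ * (xc p hpt)
            = (r.1⁻¹ * xc r hrt)⁻¹ * (r.1⁻¹ * p.1) * (p.1⁻¹ * xc p hpt) := by group
        rw [hre]
        exact mul_mem (mul_mem (inv_mem (Subgroup.mem_sup_right h2)) h3)
          (Subgroup.mem_sup_left h1)
      exact my_distrib A p.2 r.2 ⟨hmem1, hmem2⟩
    obtain ⟨x, hx⟩ := ih t' hlen hp'
    have hxt : ∀ p (hp' : p ∈ t), x ∈ (xc p hp') • ((A ⊓ p.2 : Subgroup G) : Set G) :=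
      fun p hp' => hx _ (List.mem_pmap.2 ⟨p, hp', rfl⟩)
    have hp0 : p0 ∈ t := ht ▸ List.mem_cons_self
    refine ⟨x, ?_⟩
    rintro p hpl
    rcases List.mem_cons.1 hpl with rfl | hpt
    · exact my_coset_trans (hxc p0 hp0).1 (hxt p0 hp0) inf_le_left
    · exact my_coset_trans (hxc p hpt).2 (hxt p hpt) inf_le_right

end Cyclic

/-- The Helly dimension of a cyclic group of order `n > 1` equals `2`: any finite family
of left cosets in which every pair of cosets meets has a common element (`κ ≤ 2`), and
there are two cosets with empty intersection (so `κ ≥ 2`). -/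
theorem helly_dimension_cyclic_eq_two
    {G : Type} [Group G] [Fintype G] [IsCyclic G] (hn : 1 < Fintype.card G) :
    (∀ {ι : Type} [Fintype ι] (g : ι → G) (H : ι → Subgroup G),
        (∀ i j : ι, (g i • (H i : Set G) ∩ g j • (H j : Set G)).Nonempty) →
        (⋂ i, g i • (H i : Set G)).Nonempty) ∧
    (∃ (g₁ g₂ : G) (H₁ H₂ : Subgroup G),
        g₁ • (H₁ : Set G) ∩ g₂ • (H₂ : Set G) = ∅) := by
  constructor
  · intro ι _ g H hpair
    classical
    set l : List (G × Subgroup G) := (Finset.univ : Finset ι).toList.map (fun i => (g i, H i))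
      with hldef
    have hl : ∀ p ∈ l, ∀ q ∈ l, (p.1 • (p.2 : Set G) ∩ q.1 • (q.2 : Set G)).Nonempty := by
      intro p hp q hq
      rw [hldef, List.mem_map] at hp hq
      obtain ⟨i, _, rfl⟩ := hp
      obtain ⟨j, _, rfl⟩ := hq
      exact hpair i j
    obtain ⟨x, hx⟩ := my_helly_list l.length l rfl hl
    refine ⟨x, Set.mem_iInter.2 fun i => ?_⟩
    exact hx (g i, H i) (List.mem_map.2 ⟨i, by simp, rfl⟩)
  · obtain ⟨g2, hg2⟩ := Fintype.exists_ne_of_one_lt_card hn 1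
    refine ⟨1, g2, ⊥, ⊥, ?_⟩
    rw [Set.eq_empty_iff_forall_notMem]
    rintro x ⟨hx1, hx2⟩
    rw [mem_leftCoset_iff, SetLike.mem_coe, Subgroup.mem_bot] at hx1 hx2
    have h1 : x = 1 := by simpa using hx1
    exact hg2 (((inv_mul_eq_one.1 hx2).trans h1))
end

section
/- Let G̃ be a generalized quaternion/binary dihedral group with presentation ⟨a, b | b⁴ = 1, aⁿ = b², b a b⁻¹ = a⁻¹⟩ for n ≥ 2. Then the Helly dimension of G̃ is at most 4: any finite family of left cosets of subgroups of G̃ in which every 4 cosets have a common element has a common element. -/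
open scoped Pointwise



/-- gcd-lcm distributivity for positive naturals. -/
lemma helly_gcd_lcm_distrib (a b c : ℕ) (ha : a ≠ 0) (hb : b ≠ 0) (hc : c ≠ 0) :
    Nat.gcd (Nat.lcm a b) c = Nat.lcm (Nat.gcd a c) (Nat.gcd b c) := by
  have hl : Nat.lcm a b ≠ 0 := Nat.lcm_ne_zero ha hb
  have hg1 : Nat.gcd a c ≠ 0 := fun h => ha (Nat.gcd_eq_zero_iff.mp h).1
  have hg2 : Nat.gcd b c ≠ 0 := fun h => hb (Nat.gcd_eq_zero_iff.mp h).1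
  refine Nat.eq_of_factorization_eq (fun h => hl (Nat.gcd_eq_zero_iff.mp h).1)
    (Nat.lcm_ne_zero hg1 hg2) fun p => ?_
  rw [Nat.factorization_gcd hl hc, Nat.factorization_lcm ha hb,
      Nat.factorization_lcm hg1 hg2, Nat.factorization_gcd ha hc, Nat.factorization_gcd hb hc,
      Finsupp.inf_apply, Finsupp.sup_apply, Finsupp.sup_apply, Finsupp.inf_apply,
      Finsupp.inf_apply]
  exact inf_sup_right _ _ _

lemma helly_bezout_merge {m₁ m₂ c₁ c₂ : ℤ} (h : c₁ ≡ c₂ [ZMOD (Int.gcd m₁ m₂ : ℤ)]) :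
    ∃ k : ℤ, k ≡ c₁ [ZMOD m₁] ∧ k ≡ c₂ [ZMOD m₂] := by
  obtain ⟨w, hw⟩ := Int.modEq_iff_dvd.mp h
  refine ⟨c₁ + m₁ * (Int.gcdA m₁ m₂ * w), ?_, ?_⟩
  · exact Int.modEq_iff_dvd.mpr ⟨-(Int.gcdA m₁ m₂ * w), by ring⟩
  · refine Int.modEq_iff_dvd.mpr ⟨Int.gcdB m₁ m₂ * w, ?_⟩
    have hb := Int.gcd_eq_gcd_ab m₁ m₂
    have : c₂ - c₁ = (m₁ * Int.gcdA m₁ m₂ + m₂ * Int.gcdB m₁ m₂) * w := by rw [← hb]; exact hw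
    linear_combination this

lemma helly_modEq_lcm {m k a b : ℤ} (h1 : a ≡ b [ZMOD m]) (h2 : a ≡ b [ZMOD k]) :
    a ≡ b [ZMOD (Int.lcm m k : ℤ)] :=
  Int.modEq_iff_dvd.mpr (Int.coe_lcm_dvd (Int.modEq_iff_dvd.mp h1) (Int.modEq_iff_dvd.mp h2))

lemma helly_int_aux : ∀ (l : List (ℤ × ℤ)) (M z : ℤ), M ≠ 0 →
    (∀ p ∈ l, p.1 ≠ 0) →
    (∀ p ∈ l, ∀ q ∈ l, p.2 ≡ q.2 [ZMOD (Int.gcd p.1 q.1 : ℤ)]) →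
    (∀ p ∈ l, z ≡ p.2 [ZMOD (Int.gcd M p.1 : ℤ)]) →
    ∃ w : ℤ, w ≡ z [ZMOD M] ∧ ∀ p ∈ l, w ≡ p.2 [ZMOD p.1]
  | [], M, z, _, _, _, _ => ⟨z, Int.ModEq.refl z, by simp⟩
  | (p :: l), M, z, hM, hl, hco, hacc => by
    obtain ⟨k, hkz, hkc⟩ := helly_bezout_merge (hacc p (by simp))
    have hm₁ : p.1 ≠ 0 := hl p (by simp)
    have hM' : (Int.lcm M p.1 : ℤ) ≠ 0 := by
      have := Nat.lcm_ne_zero (Int.natAbs_ne_zero.mpr hM) (Int.natAbs_ne_zero.mpr hm₁)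
      exact_mod_cast this
    have hacc' : ∀ q ∈ l, k ≡ q.2 [ZMOD (Int.gcd (Int.lcm M p.1 : ℤ) q.1 : ℤ)] := by
      intro q hq
      have hq1 : q.1 ≠ 0 := hl q (by simp [hq])
      have h1 : k ≡ q.2 [ZMOD (Int.gcd M q.1 : ℤ)] :=
        (hkz.of_dvd (Int.gcd_dvd_left _ _)).trans (hacc q (by simp [hq]))
      have h2 : k ≡ q.2 [ZMOD (Int.gcd p.1 q.1 : ℤ)] :=
        (hkc.of_dvd (Int.gcd_dvd_left _ _)).trans (hco p (by simp) q (by simp [hq]))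
      have h3 := helly_modEq_lcm h1 h2
      have key : Int.gcd ((Int.lcm M p.1 : ℤ)) q.1
          = Nat.lcm (Int.gcd M q.1) (Int.gcd p.1 q.1) := by
        have : Int.gcd ((Int.lcm M p.1 : ℤ)) q.1
            = Nat.gcd (Nat.lcm M.natAbs p.1.natAbs) q.1.natAbs := by
          simp [Int.gcd, Int.lcm]
        rw [this, helly_gcd_lcm_distrib _ _ _ (Int.natAbs_ne_zero.mpr hM)
          (Int.natAbs_ne_zero.mpr hm₁) (Int.natAbs_ne_zero.mpr hq1)]
        rfl
      rw [key]
      have : Int.lcm (Int.gcd M q.1 : ℤ) (Int.gcd p.1 q.1 : ℤ)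
          = Nat.lcm (Int.gcd M q.1) (Int.gcd p.1 q.1) := by
        simp [Int.lcm]
      rw [this] at h3
      exact h3
    obtain ⟨w, hwk, hwl⟩ := helly_int_aux l (Int.lcm M p.1 : ℤ) k hM' (fun q hq => hl q (by simp [hq]))
      (fun q hq r hr => hco q (by simp [hq]) r (by simp [hr])) hacc'
    refine ⟨w, (hwk.of_dvd (Int.dvd_lcm_left _ _)).trans hkz, ?_⟩
    intro q hq
    rcases List.mem_cons.mp hq with rfl | hq
    · exact (hwk.of_dvd (Int.dvd_lcm_right _ _)).trans hkc
    · exact hwl q hq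

lemma helly_int (l : List (ℤ × ℤ)) (hl : ∀ p ∈ l, p.1 ≠ 0)
    (hco : ∀ p ∈ l, ∀ q ∈ l, p.2 ≡ q.2 [ZMOD (Int.gcd p.1 q.1 : ℤ)]) :
    ∃ w : ℤ, ∀ p ∈ l, w ≡ p.2 [ZMOD p.1] := by
  obtain ⟨w, -, hw⟩ := helly_int_aux l 1 0 one_ne_zero hl hco
    (fun p hp => by simpa [Int.gcd] using Int.modEq_one)
  exact ⟨w, hw⟩


def hellyPar {n : ℕ} : QuaternionGroup n → ZMod 2
  | .a _ => 0
  | .xa _ => 1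

lemma hellyPar_mul {n : ℕ} (x y : QuaternionGroup n) :
    hellyPar (x * y) = hellyPar x + hellyPar y := by
  rcases x with i | i <;> rcases y with j | j <;> simp [hellyPar] <;> decide

lemma hellyPar_one {n : ℕ} : hellyPar (1 : QuaternionGroup n) = 0 := rfl

lemma hellyPar_eq_zero_iff {n : ℕ} (y : QuaternionGroup n) :
    hellyPar y = 0 ↔ ∃ m, y = QuaternionGroup.a m := by
  rcases y with i | i
  · simp [hellyPar]
  · simp only [hellyPar]
    constructor
    · intro h; exact absurd h (by decide)
    · rintro ⟨m, hm⟩; cases hm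

lemma helly_mem_coset_iff {G : Type*} [Group G] (H : Subgroup G) (gg w u : G)
    (hw : w ∈ gg • (H : Set G)) : u ∈ gg • (H : Set G) ↔ w⁻¹ * u ∈ H := by
  rw [Set.mem_smul_set_iff_inv_smul_mem, smul_eq_mul] at hw ⊢
  constructor
  · intro hu
    have h2 := H.mul_mem (H.inv_mem hw) hu
    have : (gg⁻¹ * w)⁻¹ * (gg⁻¹ * u) = w⁻¹ * u := by group
    rwa [this] at h2
  · intro hu
    have h2 := H.mul_mem hw hu
    have : gg⁻¹ * w * (w⁻¹ * u) = gg⁻¹ * u := by group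
    rwa [this] at h2

lemma helly_key_mul {n : ℕ} (x : QuaternionGroup n) (cc u : ZMod (2 * n)) :
    (x * QuaternionGroup.a cc)⁻¹ * (x * QuaternionGroup.a u) = QuaternionGroup.a (u - cc) := by
  rw [mul_inv_rev, mul_assoc, inv_mul_cancel_left,
    show (QuaternionGroup.a cc)⁻¹ = QuaternionGroup.a (-cc) from rfl,
    QuaternionGroup.a_mul_a]
  congr 1
  ring

def hellyT (n : ℕ) (K : Subgroup (QuaternionGroup n)) : AddSubgroup ℤ where
  carrier := {z : ℤ | QuaternionGroup.a ((z : ZMod (2 * n))) ∈ K}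
  zero_mem' := by
    show QuaternionGroup.a (((0 : ℤ) : ZMod (2 * n))) ∈ K
    rw [Int.cast_zero, ← QuaternionGroup.one_def]
    exact K.one_mem
  add_mem' := by
    intro u v hu hv
    show QuaternionGroup.a (((u + v : ℤ) : ZMod (2 * n))) ∈ K
    have : ((u + v : ℤ) : ZMod (2 * n)) = ((u : ZMod (2 * n))) + ((v : ZMod (2 * n))) := by
      push_cast; ring
    rw [this, ← QuaternionGroup.a_mul_a]
    exact K.mul_mem hu hv
  neg_mem' := by
    intro u hu
    show QuaternionGroup.a (((-u : ℤ) : ZMod (2 * n))) ∈ K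
    have : ((-u : ℤ) : ZMod (2 * n)) = -((u : ZMod (2 * n))) := by push_cast; ring
    rw [this, show QuaternionGroup.a (-((u : ℤ) : ZMod (2 * n)))
      = (QuaternionGroup.a ((u : ℤ) : ZMod (2 * n)))⁻¹ from rfl]
    exact K.inv_mem hu

lemma hellyT_mem {n : ℕ} {K : Subgroup (QuaternionGroup n)} {z : ℤ} :
    z ∈ hellyT n K ↔ QuaternionGroup.a ((z : ZMod (2 * n))) ∈ K := Iff.rfl



/-- The binary dihedral (dicyclic) group `⟨a, b ∣ b⁴ = 1, aⁿ = b², bab⁻¹ = a⁻¹⟩` of order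
`4n` (`n ≥ 2`) has Helly dimension at most `4`: any finite family of left cosets in which
every `4` cosets have a common element has a common element. -/
theorem helly_binary_dihedral_le_four
    (n : ℕ) (hn : 2 ≤ n) {ι : Type} [Fintype ι]
    (g : ι → QuaternionGroup n) (H : ι → Subgroup (QuaternionGroup n))
    (h : ∀ s : Finset ι, s.card ≤ 4 →
      (⋂ i ∈ s, g i • (H i : Set (QuaternionGroup n))).Nonempty) :
    (⋂ i, g i • (H i : Set (QuaternionGroup n))).Nonempty := by
  classical
  haveI : NeZero (2 * n) := ⟨by omega⟩
  have castval : ∀ u : ZMod (2 * n), ((u.val : ℕ) : ZMod (2 * n)) = u :=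
    ZMod.natCast_rightInverse
  have hmono : ∀ {s s' : Finset ι}, s ⊆ s' → ∀ {w : QuaternionGroup n},
      w ∈ (⋂ i ∈ s', g i • (H i : Set (QuaternionGroup n))) →
      w ∈ ⋂ i ∈ s, g i • (H i : Set (QuaternionGroup n)) := by
    intro s s' hss w hw
    rw [Set.mem_iInter₂] at hw ⊢
    exact fun i hi => hw i (hss hi)
  -- Step 1: find `x` such that every at-most-2-fold intersection contains an element of the
  -- same parity as `x`.
  obtain ⟨x, hx⟩ : ∃ x : QuaternionGroup n, ∀ s : Finset ι, s.card ≤ 2 →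
      ∃ w ∈ ⋂ i ∈ s, g i • (H i : Set (QuaternionGroup n)), hellyPar w = hellyPar x := by
    by_cases h0 : ∀ s : Finset ι, s.card ≤ 2 →
        ∃ w ∈ ⋂ i ∈ s, g i • (H i : Set (QuaternionGroup n)), hellyPar w = 0
    · exact ⟨QuaternionGroup.a 0, h0⟩
    · push_neg at h0
      obtain ⟨s₀, hs₀c, hs₀⟩ := h0
      refine ⟨QuaternionGroup.xa 0, fun s hs => ?_⟩
      obtain ⟨w, hw⟩ := h (s ∪ s₀) (le_trans (Finset.card_union_le _ _) (by omega))
      refine ⟨w, hmono Finset.subset_union_left hw, ?_⟩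
      have hw0 := hs₀ w (hmono Finset.subset_union_right hw)
      rcases w with i | i
      · exact absurd rfl hw0
      · rfl
  -- Step 2: a distinguished element of each coset of the form `x * a c`.
  have hxw : ∀ i : ι, ∃ cc : ZMod (2 * n),
      x * QuaternionGroup.a cc ∈ g i • (H i : Set (QuaternionGroup n)) := by
    intro i
    obtain ⟨w, hw, hwp⟩ := hx {i} (by simp)
    have hw' : w ∈ g i • (H i : Set (QuaternionGroup n)) :=
      Set.mem_iInter₂.mp hw i (Finset.mem_singleton_self i)
    have h0 : hellyPar (x⁻¹ * w) = 0 := by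
      rw [hellyPar_mul, hwp, ← hellyPar_mul, inv_mul_cancel, hellyPar_one]
    obtain ⟨cc, hcc⟩ := (hellyPar_eq_zero_iff _).mp h0
    refine ⟨cc, ?_⟩
    rw [← hcc, mul_inv_cancel_left]
    exact hw'
  choose c hc using hxw
  have hmem : ∀ (i : ι) (u : ZMod (2 * n)),
      x * QuaternionGroup.a u ∈ g i • (H i : Set (QuaternionGroup n)) ↔
        QuaternionGroup.a (u - c i) ∈ H i := by
    intro i u
    rw [helly_mem_coset_iff _ _ _ _ (hc i), helly_key_mul]
  -- Step 3: the subgroups of ℤ.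
  choose m hm using fun i => Int.subgroup_cyclic (hellyT n (H i))
  have hdvd : ∀ (i : ι) (z : ℤ), z ∈ hellyT n (H i) ↔ m i ∣ z := by
    intro i z
    rw [hm i, AddSubgroup.mem_closure_singleton]
    constructor
    · rintro ⟨k, hk⟩; exact ⟨k, by rw [← hk, smul_eq_mul]; ring⟩
    · rintro ⟨k, hk⟩; exact ⟨k, by rw [smul_eq_mul, hk]; ring⟩
  have hm0 : ∀ i, m i ≠ 0 := by
    intro i hmi
    have h2n : ((2 * n : ℕ) : ℤ) ∈ hellyT n (H i) := by
      rw [hellyT_mem]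
      have : (((2 * n : ℕ) : ℤ) : ZMod (2 * n)) = 0 := by
        push_cast
        exact_mod_cast ZMod.natCast_self (2 * n)
      rw [this, ← QuaternionGroup.one_def]
      exact (H i).one_mem
    have := (hdvd i _).mp h2n
    rw [hmi, zero_dvd_iff] at this
    have : (2 * n : ℕ) = 0 := by exact_mod_cast this
    omega
  -- Step 4: pairwise compatibility of the congruences.
  have hpair : ∀ i j : ι, ∃ d : ℤ,
      d ≡ ((c i).val : ℤ) [ZMOD m i] ∧ d ≡ ((c j).val : ℤ) [ZMOD m j] := by
    intro i j
    obtain ⟨w, hw, hwp⟩ := hx {i, j} (le_trans (Finset.card_insert_le _ _) (by simp))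
    have hwi : w ∈ g i • (H i : Set (QuaternionGroup n)) := Set.mem_iInter₂.mp hw i (by simp)
    have hwj : w ∈ g j • (H j : Set (QuaternionGroup n)) := Set.mem_iInter₂.mp hw j (by simp)
    have h0 : hellyPar (x⁻¹ * w) = 0 := by
      rw [hellyPar_mul, hwp, ← hellyPar_mul, inv_mul_cancel, hellyPar_one]
    obtain ⟨d, hd⟩ := (hellyPar_eq_zero_iff _).mp h0
    have hwx : w = x * QuaternionGroup.a d := by rw [← hd, mul_inv_cancel_left]
    have key : ∀ (k : ι), w ∈ g k • (H k : Set (QuaternionGroup n)) →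
        (d.val : ℤ) ≡ ((c k).val : ℤ) [ZMOD m k] := by
      intro k hwk
      have h1 : QuaternionGroup.a (d - c k) ∈ H k := (hmem k d).mp (hwx ▸ hwk)
      have h2 : ((d.val : ℤ) - ((c k).val : ℤ)) ∈ hellyT n (H k) := by
        rw [hellyT_mem]
        have hcast : ((((d.val : ℤ) - ((c k).val : ℤ)) : ℤ) : ZMod (2 * n)) = d - c k := by
          push_cast
          rw [castval, castval]
        rw [hcast]
        exact h1
      have h3 := (hdvd k _).mp h2
      refine Int.modEq_iff_dvd.mpr ?_
      have := dvd_neg.mpr h3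
      simpa [neg_sub] using this
    exact ⟨(d.val : ℤ), key i hwi, key j hwj⟩
  -- Step 5: solve the system of congruences.
  obtain ⟨z, hz⟩ := helly_int ((Finset.univ : Finset ι).toList.map fun i => (m i, ((c i).val : ℤ)))
    (by rintro p hp
        obtain ⟨i, -, rfl⟩ := List.mem_map.mp hp
        exact hm0 i)
    (by rintro p hp q hq
        obtain ⟨i, -, rfl⟩ := List.mem_map.mp hp
        obtain ⟨j, -, rfl⟩ := List.mem_map.mp hq
        obtain ⟨d, hdi, hdj⟩ := hpair i j
        exact (hdi.symm.of_dvd (Int.gcd_dvd_left _ _)).trans (hdj.of_dvd (Int.gcd_dvd_right _ _)))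
  refine ⟨x * QuaternionGroup.a ((z : ℤ) : ZMod (2 * n)), Set.mem_iInter.mpr fun i => ?_⟩
  have hzi : z ≡ ((c i).val : ℤ) [ZMOD m i] := hz (m i, ((c i).val : ℤ))
    (List.mem_map.mpr ⟨i, Finset.mem_toList.mpr (Finset.mem_univ i), rfl⟩)
  have hdv : m i ∣ z - ((c i).val : ℤ) := by
    have h1 := Int.modEq_iff_dvd.mp hzi
    have h2 := dvd_neg.mpr h1
    simpa [neg_sub] using h2
  have hT : (z - ((c i).val : ℤ)) ∈ hellyT n (H i) := (hdvd i _).mpr hdv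
  rw [hellyT_mem] at hT
  have hcast : (((z - ((c i).val : ℤ)) : ℤ) : ZMod (2 * n))
      = ((z : ℤ) : ZMod (2 * n)) - c i := by
    push_cast
    rw [castval]
  rw [hcast] at hT
  exact (hmem i _).mpr hT
end

section
/- The pointwise stabilizer in SL(2, ℂ) of any linear subspace of dimension ≥ 2 of an irreducible rational SL(2, ℂ)-module V is a finite group. -/
open MvPolynomial

/-- The action of `g ∈ SL(2, ℂ)` on polynomials in two variables by the substitution
`(g·f)(x) = f(g⁻¹ x)`; binary forms of degree `d` form an invariant subspace. -/
noncomputable def sl2Act (g : Matrix.SpecialLinearGroup (Fin 2) ℂ)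
    (p : MvPolynomial (Fin 2) ℂ) : MvPolynomial (Fin 2) ℂ :=
  MvPolynomial.aeval (fun i : Fin 2 => ∑ j : Fin 2, ((g⁻¹).1 i j) • (X j : MvPolynomial (Fin 2) ℂ)) p


lemma mvAeval_eq_eval (w : Fin 2 → ℂ) (q : MvPolynomial (Fin 2) ℂ) :
    MvPolynomial.aeval w q = eval w q := by
  rw [MvPolynomial.aeval_def, Algebra.algebraMap_self]
  rfl

lemma eval_mvAeval (w : Fin 2 → ℂ) (gs : Fin 2 → MvPolynomial (Fin 2) ℂ)
    (p : MvPolynomial (Fin 2) ℂ) :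
    eval w (MvPolynomial.aeval gs p) = eval (fun i => eval w (gs i)) p := by
  have h := AlgHom.congr_fun (MvPolynomial.comp_aeval (f := gs)
    (MvPolynomial.aeval w (R := ℂ) (S₁ := ℂ))) p
  simpa [mvAeval_eq_eval] using h

noncomputable def lineP (a b : Fin 2 → ℂ) (p : MvPolynomial (Fin 2) ℂ) : Polynomial ℂ :=
  MvPolynomial.aeval (fun i => Polynomial.C (a i) + Polynomial.C (b i) * Polynomial.X) p

lemma lineP_eval (a b : Fin 2 → ℂ) (p : MvPolynomial (Fin 2) ℂ) (s : ℂ) :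
    (lineP a b p).eval s = eval (fun i => a i + s * b i) p := by
  have h := AlgHom.congr_fun (MvPolynomial.comp_aeval
    (f := fun i => Polynomial.C (a i) + Polynomial.C (b i) * Polynomial.X)
    (Polynomial.aeval s (R := ℂ))) p
  simp only [AlgHom.coe_comp, Function.comp_apply] at h
  have hfun : (fun i => (Polynomial.aeval s)
      (Polynomial.C (a i) + Polynomial.C (b i) * Polynomial.X)) = fun i => a i + s * b i := by
    funext i
    rw [map_add, map_mul, Polynomial.aeval_C, Polynomial.aeval_C, Polynomial.aeval_X,
      Algebra.algebraMap_self_apply, Algebra.algebraMap_self_apply, mul_comm]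
  rw [hfun] at h
  rw [lineP, ← Polynomial.coe_aeval_eq_eval,
    show ((Polynomial.aeval s : Polynomial ℂ →ₐ[ℂ] ℂ) : Polynomial ℂ → ℂ) =
      (Polynomial.aeval s) from rfl, h, mvAeval_eq_eval]


lemma eval_smul_of_isHomogeneous {p : MvPolynomial (Fin 2) ℂ} {n : ℕ}
    (hp : p.IsHomogeneous n) (c : ℂ) (v : Fin 2 → ℂ) :
    eval (c • v) p = c ^ n * eval v p := by
  rw [eval_eq, eval_eq, Finset.mul_sum]
  apply Finset.sum_congr rfl
  intro d hd
  have hdeg : ∑ i ∈ d.support, d i = n := by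
    have h := hp (mem_support_iff.mp hd)
    simpa [Finsupp.weight_apply, Finsupp.sum] using h
  have hprod : ∏ i ∈ d.support, (c • v) i ^ d i
      = (∏ i ∈ d.support, c ^ d i) * ∏ i ∈ d.support, v i ^ d i := by
    rw [← Finset.prod_mul_distrib]
    apply Finset.prod_congr rfl
    intro i _
    simp [mul_pow]
  rw [hprod, Finset.prod_pow_eq_pow_sum, hdeg]
  ring

lemma eval_zero_of_isHomogeneous {p : MvPolynomial (Fin 2) ℂ} {n : ℕ}
    (hp : p.IsHomogeneous n) (hn : 1 ≤ n) : eval 0 p = 0 := by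
  have h := eval_smul_of_isHomogeneous hp 0 0
  rw [smul_zero] at h
  rw [h, zero_pow (by omega), zero_mul]


lemma exists_indep_points {p : MvPolynomial (Fin 2) ℂ} (hp : p ≠ 0) (h0 : eval 0 p = 0) :
    ∃ v w : Fin 2 → ℂ, LinearIndependent ℂ ![v, w] ∧ eval v p ≠ 0 ∧ eval w p ≠ 0 := by
  obtain ⟨v, hv⟩ : ∃ v, eval v p ≠ 0 := by
    by_contra h
    push_neg at h
    exact hp (MvPolynomial.funext fun x => by simp [h x])
  have hv0 : v ≠ 0 := fun h => hv (h ▸ h0)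
  obtain ⟨u, hvu⟩ := exists_linearIndependent_pair_of_one_lt_finrank
    (by rw [Module.finrank_fin_fun]; omega : 1 < Module.finrank ℂ (Fin 2 → ℂ)) hv0
  set Q := lineP v u p with hQ
  have hQ0 : Q.eval 0 = eval v p := by
    rw [lineP_eval]
    have : (fun i => v i + 0 * u i) = v := by funext i; simp
    rw [this]
  have hQne : Q ≠ 0 := by
    intro h
    rw [h, Polynomial.eval_zero] at hQ0
    exact hv hQ0.symm
  have hfin : ({s : ℂ | Q.IsRoot s} ∪ {0}).Finite :=
    (Polynomial.finite_setOf_isRoot hQne).union (Set.finite_singleton 0)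
  obtain ⟨s, hs⟩ := hfin.infinite_compl.nonempty
  simp only [Set.mem_compl_iff, Set.mem_union, Set.mem_singleton_iff, Set.mem_setOf_eq,
    not_or] at hs
  refine ⟨v, fun i => v i + s * u i, ?_, hv, ?_⟩
  · rw [LinearIndependent.pair_iff]
    intro a b hab
    have hw : (fun i => v i + s * u i) = v + s • u := by funext i; simp
    rw [hw] at hab
    have hab' : (a + b) • v + (b * s) • u = 0 := by
      rw [← hab]
      module
    obtain ⟨h1, h2⟩ := LinearIndependent.pair_iff.mp hvu (a + b) (b * s) hab'
    have hb : b = 0 := by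
      rcases mul_eq_zero.mp h2 with h | h
      · exact h
      · exact absurd h hs.2
    subst hb
    simp at h1
    exact ⟨h1, rfl⟩
  · rw [← lineP_eval]
    exact hs.1

lemma finite_zero_one_set {f h : MvPolynomial (Fin 2) ℂ} {d : ℕ} (hd : 1 ≤ d)
    (hf : f.IsHomogeneous d) (hh : h.IsHomogeneous d) (hf0 : f ≠ 0) :
    {v : Fin 2 → ℂ | eval v f = 0 ∧ eval v h = 1}.Finite := by
  set S := {v : Fin 2 → ℂ | eval v f = 0 ∧ eval v h = 1} with hS
  have scale : ∀ (g : MvPolynomial (Fin 2) ℂ), g.IsHomogeneous d → ∀ v : Fin 2 → ℂ, v 1 ≠ 0 →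
      eval v g = (v 1) ^ d * (lineP ![0,1] ![1,0] g).eval (v 0 / v 1) := by
    intro g hg v hv1
    rw [lineP_eval]
    have hpt : (fun i => ![(0:ℂ),1] i + (v 0 / v 1) * ![(1:ℂ),0] i) = ![v 0 / v 1, 1] := by
      funext i; fin_cases i <;> simp
    rw [hpt]
    have hvv : v = (v 1) • ![v 0 / v 1, (1:ℂ)] := by
      funext i; fin_cases i
      · simp only [Pi.smul_apply, Fin.zero_eta, Matrix.cons_val_zero, smul_eq_mul]
        field_simp
      · simp
    conv_lhs => rw [hvv]
    rw [eval_smul_of_isHomogeneous hg]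
  set P := lineP ![0,1] ![1,0] f with hP
  set Ph := lineP ![0,1] ![1,0] h with hPh
  have key0 : P ≠ 0 := by
    intro hP0
    have key : ∀ v : Fin 2 → ℂ, v 1 ≠ 0 → eval v f = 0 := by
      intro v hv1
      rw [scale f hf v hv1, ← hP, hP0, Polynomial.eval_zero, mul_zero]
    apply hf0
    apply MvPolynomial.funext
    intro v
    rw [map_zero]
    by_cases hv1 : v 1 = 0
    · set Q := lineP ![v 0, 0] ![0,1] f with hQdef
      have hQval : ∀ s, Q.eval s = eval ![v 0, s] f := by
        intro s
        rw [hQdef, lineP_eval]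
        have hpt : (fun i => ![v 0, (0:ℂ)] i + s * ![(0:ℂ),1] i) = ![v 0, s] := by
          funext i; fin_cases i <;> simp
        rw [hpt]
      have hQzero : Q = 0 := by
        apply Polynomial.eq_zero_of_infinite_isRoot
        have hsub : {s : ℂ | s ≠ 0} ⊆ {s : ℂ | Q.IsRoot s} := by
          intro s hs
          have hval : eval ![v 0, s] f = 0 := key _ (by simpa using hs)
          simp only [Set.mem_setOf_eq, Polynomial.IsRoot]
          rw [hQval s, hval]
        have hinf : ({s : ℂ | s ≠ 0}).Infinite := by
          have h1 := (Set.finite_singleton (0:ℂ)).infinite_compl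
          have h2 : ({(0:ℂ)}ᶜ : Set ℂ) = {s : ℂ | s ≠ 0} := by ext x; simp
          rwa [h2] at h1
        exact hinf.mono hsub
      have hveq : v = ![v 0, (0:ℂ)] := by
        funext i; fin_cases i <;> simp [hv1]
      rw [hveq, ← hQval 0, hQzero, Polynomial.eval_zero]
    · exact key v hv1
  have hBfin : (S ∩ {v | v 1 = 0}).Finite := by
    set c := eval ![(1:ℂ),0] h with hc
    have hpne : (Polynomial.C c * Polynomial.X ^ d - 1 : Polynomial ℂ) ≠ 0 := by
      intro hzero
      have h2 := congrArg (Polynomial.eval 0) hzero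
      simp [zero_pow (by omega : d ≠ 0)] at h2
    have hsub : (S ∩ {v | v 1 = 0}) ⊆ (fun x : ℂ => ![x, (0:ℂ)]) ''
        {x : ℂ | (Polynomial.C c * Polynomial.X ^ d - 1).IsRoot x} := by
      rintro v ⟨⟨hvf, hvh⟩, hv1⟩
      simp only [Set.mem_setOf_eq] at hv1
      refine ⟨v 0, ?_, ?_⟩
      · have hvv : v = (v 0) • ![(1:ℂ), 0] := by
          funext i; fin_cases i <;> simp [hv1]
        rw [hvv, eval_smul_of_isHomogeneous hh] at hvh
        simp only [Set.mem_setOf_eq, Polynomial.IsRoot, Polynomial.eval_sub,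
          Polynomial.eval_mul, Polynomial.eval_pow, Polynomial.eval_C, Polynomial.eval_X,
          Polynomial.eval_one]
        rw [← hc] at hvh
        linear_combination hvh
      · funext i; fin_cases i <;> simp [hv1]
    exact (((Polynomial.finite_setOf_isRoot hpne).image _).subset hsub)
  have hAfin : (S ∩ {v | v 1 ≠ 0}).Finite := by
    have hroots : {t : ℂ | P.IsRoot t}.Finite := Polynomial.finite_setOf_isRoot key0
    have hT : (⋃ t ∈ {t : ℂ | P.IsRoot t}, (({t} : Set ℂ) ×ˢ {y : ℂ | y ^ d * Ph.eval t = 1})).Finite := by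
      apply Set.Finite.biUnion hroots
      intro t _
      apply Set.Finite.prod (Set.finite_singleton t)
      have hpne : (Polynomial.C (Ph.eval t) * Polynomial.X ^ d - 1 : Polynomial ℂ) ≠ 0 := by
        intro hzero
        have h2 := congrArg (Polynomial.eval 0) hzero
        simp [zero_pow (by omega : d ≠ 0)] at h2
      apply (Polynomial.finite_setOf_isRoot hpne).subset
      intro y hy
      simp only [Set.mem_setOf_eq] at hy ⊢
      simp only [Polynomial.IsRoot, Polynomial.eval_sub, Polynomial.eval_mul,
        Polynomial.eval_pow, Polynomial.eval_C, Polynomial.eval_X, Polynomial.eval_one]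
      linear_combination hy
    apply Set.Finite.of_finite_image (f := fun v : Fin 2 → ℂ => (v 0 / v 1, v 1))
    · apply hT.subset
      rintro _ ⟨v, ⟨⟨hvf, hvh⟩, hv1⟩, rfl⟩
      simp only [Set.mem_setOf_eq] at hv1
      have hfval := scale f hf v hv1
      have hhval := scale h hh v hv1
      rw [hvf] at hfval
      rw [hvh] at hhval
      have hProot : P.IsRoot (v 0 / v 1) := by
        have := (mul_eq_zero.mp hfval.symm).resolve_left (pow_ne_zero d hv1)
        exact this
      refine Set.mem_biUnion hProot ⟨rfl, ?_⟩
      simp only [Set.mem_setOf_eq]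
      exact hhval.symm
    · rintro v ⟨_, hv1⟩ w ⟨_, hw1⟩ heq
      simp only [Set.mem_setOf_eq] at hv1 hw1
      have h2 : v 1 = w 1 := congrArg Prod.snd heq
      have h1 : v 0 / v 1 = w 0 / w 1 := congrArg Prod.fst heq
      funext i
      fin_cases i
      · show v 0 = w 0
        calc v 0 = (v 0 / v 1) * v 1 := (div_mul_cancel₀ _ hv1).symm
        _ = (w 0 / w 1) * w 1 := by rw [h1, h2]
        _ = w 0 := div_mul_cancel₀ _ hw1
      · exact h2
  have : S ⊆ (S ∩ {v | v 1 = 0}) ∪ (S ∩ {v | v 1 ≠ 0}) := by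
    intro v hv
    by_cases h1 : v 1 = 0
    · exact Or.inl ⟨hv, h1⟩
    · exact Or.inr ⟨hv, h1⟩
  exact (hBfin.union hAfin).subset this

lemma stab_eval {g : Matrix.SpecialLinearGroup (Fin 2) ℂ} {p : MvPolynomial (Fin 2) ℂ}
    (hg : sl2Act g p = p) (v : Fin 2 → ℂ) :
    eval (Matrix.mulVec g.1 v) p = eval v p := by
  have key : ∀ w : Fin 2 → ℂ, eval w p = eval (Matrix.mulVec (g⁻¹).1 w) p := by
    intro w
    conv_lhs => rw [← hg]
    rw [sl2Act, eval_mvAeval]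
    have hfun : (fun i => eval w (∑ j : Fin 2, ((g⁻¹).1 i j) • (X j : MvPolynomial (Fin 2) ℂ)))
        = Matrix.mulVec (g⁻¹).1 w := by
      funext i
      rw [map_sum]
      simp only [smul_eval, eval_X]
      rfl
    rw [hfun]
  have h2 := key (Matrix.mulVec g.1 v)
  rw [Matrix.mulVec_mulVec] at h2
  have h3 : (g⁻¹).1 * g.1 = 1 := by
    rw [← Matrix.SpecialLinearGroup.coe_mul, inv_mul_cancel, Matrix.SpecialLinearGroup.coe_one]
  rw [h3, Matrix.one_mulVec] at h2
  exact h2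

/-- The pointwise stabilizer in `SL(2, ℂ)` of a linear subspace of dimension `≥ 2` of the
irreducible module `Pol_d(ℂ²)` of binary forms of degree `d` is finite. -/
theorem pointwise_stabilizer_finite
    (d : ℕ) (U : Submodule ℂ (MvPolynomial (Fin 2) ℂ))
    (hU : U ≤ MvPolynomial.homogeneousSubmodule (Fin 2) ℂ d)
    (hdim : 2 ≤ Module.finrank ℂ U) :
    {g : Matrix.SpecialLinearGroup (Fin 2) ℂ | ∀ p ∈ U, sl2Act g p = p}.Finite := by
  classical
  -- two independent elements of U
  have hnt : Nontrivial U := by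
    by_contra hn
    have : Subsingleton U := not_nontrivial_iff_subsingleton.mp hn
    rw [Module.finrank_zero_of_subsingleton] at hdim
    omega
  obtain ⟨x, hx⟩ := exists_ne (0 : U)
  obtain ⟨y, hxy⟩ := exists_linearIndependent_pair_of_one_lt_finrank
    (by omega : 1 < Module.finrank ℂ U) hx
  have hpq : LinearIndependent ℂ ![(x : MvPolynomial (Fin 2) ℂ), (y : MvPolynomial (Fin 2) ℂ)] := by
    have := hxy.map' U.subtype (Submodule.ker_subtype U)
    have hcomp : (U.subtype ∘ ![x, y]) = ![(x : MvPolynomial (Fin 2) ℂ), (y : MvPolynomial (Fin 2) ℂ)] := by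
      funext i; fin_cases i <;> rfl
    rwa [hcomp] at this
  set p : MvPolynomial (Fin 2) ℂ := (x : MvPolynomial (Fin 2) ℂ) with hpdef
  set q : MvPolynomial (Fin 2) ℂ := (y : MvPolynomial (Fin 2) ℂ) with hqdef
  have hpU : p ∈ U := x.2
  have hqU : q ∈ U := y.2
  have hphom : p.IsHomogeneous d := (mem_homogeneousSubmodule _ _).mp (hU hpU)
  have hqhom : q.IsHomogeneous d := (mem_homogeneousSubmodule _ _).mp (hU hqU)
  have hpne : p ≠ 0 := hpq.ne_zero 0
  -- d ≥ 1
  have hd : 1 ≤ d := by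
    by_contra hd0
    have hd0 : d = 0 := by omega
    subst hd0
    have hconst : ∀ (r : MvPolynomial (Fin 2) ℂ), r.IsHomogeneous 0 → ∀ v, eval v r = eval 0 r := by
      intro r hr v
      have := eval_smul_of_isHomogeneous hr 0 v
      rw [zero_smul, pow_zero, one_mul] at this
      exact this.symm
    set a := eval 0 p with ha
    set b := eval 0 q with hb
    have hrel : b • p - a • q = 0 := by
      apply MvPolynomial.funext
      intro v
      rw [map_sub, smul_eval, smul_eval, hconst p hphom v, hconst q hqhom v, map_zero, ← ha, ← hb]
      ring
    have hrel' : b • p + (-a) • q = 0 := by rw [neg_smul, ← sub_eq_add_neg]; exact hrel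
    obtain ⟨hb0, ha0⟩ := LinearIndependent.pair_iff.mp hpq b (-a) hrel'
    have ha0 : a = 0 := by simpa using ha0
    apply hpne
    apply MvPolynomial.funext
    intro v
    rw [hconst p hphom v, ← ha, ha0, map_zero]
  -- two independent points where p doesn't vanish
  obtain ⟨v₁, v₂, hv12, hv1p, hv2p⟩ := exists_indep_points hpne
    (eval_zero_of_isHomogeneous hphom hd)
  -- build f i, h i and the finite invariant sets
  have construct : ∀ v : Fin 2 → ℂ, eval v p ≠ 0 →
      ∃ S : Set (Fin 2 → ℂ), S.Finite ∧ v ∈ S ∧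
        ∀ g : Matrix.SpecialLinearGroup (Fin 2) ℂ, (∀ r ∈ U, sl2Act g r = r) →
          ∀ w ∈ S, Matrix.mulVec g.1 w ∈ S := by
    intro v hvp
    set c := eval v p with hc
    set k := eval v q with hk
    set f : MvPolynomial (Fin 2) ℂ := c • q - k • p with hf
    set h : MvPolynomial (Fin 2) ℂ := c⁻¹ • p with hh
    have hfU : f ∈ U := U.sub_mem (U.smul_mem _ hqU) (U.smul_mem _ hpU)
    have hhU : h ∈ U := U.smul_mem _ hpU
    have hfhom : f.IsHomogeneous d := (mem_homogeneousSubmodule _ _).mp (hU hfU)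
    have hhhom : h.IsHomogeneous d := (mem_homogeneousSubmodule _ _).mp (hU hhU)
    have hfne : f ≠ 0 := by
      intro h0
      have : (-k) • p + c • q = 0 := by
        rw [neg_smul, add_comm, ← sub_eq_add_neg]
        exact h0
      obtain ⟨_, hc0⟩ := LinearIndependent.pair_iff.mp hpq (-k) c this
      exact hvp (hc ▸ hc0)
    refine ⟨{w : Fin 2 → ℂ | eval w f = 0 ∧ eval w h = 1}, finite_zero_one_set hd hfhom hhhom hfne, ⟨?_, ?_⟩, ?_⟩
    · rw [hf, map_sub, smul_eval, smul_eval, ← hc, ← hk]; ring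
    · rw [hh, smul_eval, ← hc, inv_mul_cancel₀ hvp]
    · intro g hg w hw
      obtain ⟨hw1, hw2⟩ := hw
      constructor
      · rw [stab_eval (hg f hfU), hw1]
      · rw [stab_eval (hg h hhU), hw2]
  obtain ⟨S₁, hS₁fin, hvS₁, hS₁inv⟩ := construct v₁ hv1p
  obtain ⟨S₂, hS₂fin, hvS₂, hS₂inv⟩ := construct v₂ hv2p
  -- injection into S₁ ×ˢ S₂
  set G := {g : Matrix.SpecialLinearGroup (Fin 2) ℂ | ∀ p ∈ U, sl2Act g p = p} with hG
  set Φ : Matrix.SpecialLinearGroup (Fin 2) ℂ → (Fin 2 → ℂ) × (Fin 2 → ℂ) :=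
    fun g => (Matrix.mulVec g.1 v₁, Matrix.mulVec g.1 v₂) with hΦ
  apply Set.Finite.of_finite_image (f := Φ)
  · apply (hS₁fin.prod hS₂fin).subset
    rintro _ ⟨g, hg, rfl⟩
    exact ⟨hS₁inv g hg v₁ hvS₁, hS₂inv g hg v₂ hvS₂⟩
  · -- injectivity
    intro g _ g' _ heq
    have h1 : Matrix.mulVec g.1 v₁ = Matrix.mulVec g'.1 v₁ := congrArg Prod.fst heq
    have h2 : Matrix.mulVec g.1 v₂ = Matrix.mulVec g'.1 v₂ := congrArg Prod.snd heq
    have hbasis : Fintype.card (Fin 2) = Module.finrank ℂ (Fin 2 → ℂ) := by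
      simp [Module.finrank_fin_fun]
    set b := basisOfLinearIndependentOfCardEqFinrank hv12 hbasis with hbdef
    have hbcoe : ⇑b = ![v₁, v₂] := coe_basisOfLinearIndependentOfCardEqFinrank hv12 hbasis
    have : Matrix.toLin' g.1 = Matrix.toLin' g'.1 := by
      apply b.ext
      intro i
      rw [hbcoe]
      fin_cases i
      · simpa [Matrix.toLin'_apply] using h1
      · simpa [Matrix.toLin'_apply] using h2
    have hmat : g.1 = g'.1 := Matrix.toLin'.injective this
    exact Subtype.ext hmat
end

section
/- Let G be a group acting on an irreducible affine variety X ⊆ V = k^n (the action induced by a linear G-action on V), let Y be an irreducible G-variety, and let m ≥ n+1. Suppose x = (y, x₁, …, x_m) and x' = (y', x₁', …, x_m') in Y × X^m are such that for every choice of indices 1 ≤ i₁ < … < i_{n+1} ≤ m, the points (y, x_{i₁}, …, x_{i_{n+1}}) and (y', x_{i₁}', …, x_{i_{n+1}}') lie in the same G-orbit of Y × X^{n+1}. Then x and x' lie in the same G-orbit of Y × X^m. -/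
/-- Key lemma for typical separating rational invariants: let `G` act linearly on
`V = kⁿ` preserving `X ⊆ V` and act on `Y`. If all `(n+1)`-subtuples (keeping the `Y`
component) of `(y, x₁, …, x_m)` and `(y', x₁', …, x_m')` lie in the same `G`-orbit, then
so do the full tuples. -/
theorem same_orbit_of_subtuples_same_orbit
    {k G Y : Type} [Field k] [IsAlgClosed k] [Group G] (n : ℕ)
    [DistribMulAction G (Fin n → k)] [SMulCommClass G k (Fin n → k)]
    [MulAction G Y]
    (X : Set (Fin n → k)) (hX : ∀ (g : G), ∀ x ∈ X, g • x ∈ X)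
    (m : ℕ) (hm : n + 1 ≤ m) (y y' : Y) (x x' : Fin m → Fin n → k)
    (hx : ∀ i, x i ∈ X) (hx' : ∀ i, x' i ∈ X)
    (h : ∀ ι : Fin (n + 1) → Fin m, StrictMono ι →
      ∃ g : G, g • y = y' ∧ ∀ j, g • x (ι j) = x' (ι j)) :
    ∃ g : G, g • y = y' ∧ ∀ i, g • x i = x' i := by
  classical
  -- choose a linearly independent spanning subset of the range of `x`
  obtain ⟨b, hbsub, hbspan, hbli⟩ := exists_linearIndependent k (Set.range x)
  have hbfin : b.Finite := hbli.setFinite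
  have : Fintype b := hbfin.fintype
  have hbcard : hbfin.toFinset.card ≤ n := by
    have h1 : Module.finrank k (Submodule.span k b) = b.toFinset.card :=
      finrank_span_set_eq_card hbli
    have h2 : Module.finrank k (Submodule.span k b) ≤ n := by
      have := Submodule.finrank_le (Submodule.span k b)
      simpa [Module.finrank_pi] using this
    rw [Set.toFinset_card] at h1
    rw [Set.Finite.card_toFinset, ← h1]
    exact h2
  -- choose an index for each element of `b`
  have hidx : ∀ v ∈ b, ∃ i : Fin m, x i = v := fun v hv => hbsub hv
  choose idx hidx' using hidx
  set B : Finset (Fin m) :=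
    hbfin.toFinset.attach.image (fun v => idx v.1 (by simpa using v.2)) with hB
  have hBcard : B.card ≤ n := le_trans (Finset.card_image_le.trans (by simp)) hbcard
  -- the span of `x '' B` is the span of all `x i`
  have hspan : ∀ i, x i ∈ Submodule.span k (x '' ↑B) := by
    intro i
    have hsub : b ⊆ x '' ↑B := by
      intro v hv
      refine ⟨idx v hv, ?_, hidx' v hv⟩
      simp only [hB, Finset.coe_image, Set.mem_image]
      exact ⟨⟨v, by simpa using hv⟩, Finset.mem_attach _ _, rfl⟩
    have h1 : Submodule.span k (Set.range x) ≤ Submodule.span k (x '' ↑B) := by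
      rw [← hbspan]
      exact Submodule.span_mono hsub
    exact h1 (Submodule.subset_span ⟨i, rfl⟩)
  -- a helper to produce a strict mono tuple containing a given small finset
  have key : ∀ s : Finset (Fin m), s.card ≤ n + 1 →
      ∃ g : G, g • y = y' ∧ ∀ j ∈ s, g • x j = x' j := by
    intro s hs
    obtain ⟨t, hst, -, htcard⟩ := Finset.exists_subsuperset_card_eq s.subset_univ hs
      (by simpa using hm)
    obtain ⟨g, hgy, hgx⟩ := h (t.orderEmbOfFin htcard) (t.orderEmbOfFin htcard).strictMono
    refine ⟨g, hgy, fun j hj => ?_⟩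
    have : j ∈ Set.range (t.orderEmbOfFin htcard) := by
      rw [Finset.range_orderEmbOfFin]
      exact hst hj
    obtain ⟨j', hj'⟩ := this
    rw [← hj']
    exact hgx j'
  -- the `g` for `B` works
  obtain ⟨g, hgy, hgB⟩ := key B (hBcard.trans (Nat.le_succ n))
  refine ⟨g, hgy, fun i => ?_⟩
  -- the `g_i` for `B ∪ {i}`
  obtain ⟨gi, hgiy, hgiB⟩ := key (insert i B)
    ((Finset.card_insert_le _ _).trans (Nat.succ_le_succ hBcard))
  -- `g` and `gi` agree on `x '' B` as linear maps, hence on the span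
  have heq : Set.EqOn (DistribMulAction.toLinearMap k (Fin n → k) g)
      (DistribMulAction.toLinearMap k (Fin n → k) gi) (x '' ↑B) := by
    rintro v ⟨j, hj, rfl⟩
    have h1 := hgB j hj
    have h2 := hgiB j (Finset.mem_insert_of_mem hj)
    change g • x j = gi • x j
    rw [h1, h2]
  have := LinearMap.eqOn_span' heq (hspan i)
  change g • x i = gi • x i at this
  rw [this]
  exact hgiB i (Finset.mem_insert_self i B)
end

section
/- Let k^× act on V = k^n (n ≥ 2, char k ≠ 2) via the torus T = (k^×)^{n-1} acting by (α₁,…,α_{n−1})·(x₁,…,x_n) = ((α₁⋯α_{n−1})x₁, α₁^{−2}x₂, α₂^{−2}x₃, …, α_{n−1}^{−2}x_n). Then a monomial in the coordinate functions on V^{n+1} is T-invariant if and only if its multidegree (total degree in the coordinates of each of the n coordinate-index classes) has the form (2d, d, d, …, d). Consequently, the points v = (−e₁, e₁, e₂, …, e_n) and v' = (e₁, e₁, e₂, …, e_n) in V^{n+1} are separated by the invariant x(1)₁x(2)₁x(3)₂⋯x(n+1)_n, but cannot be separated by any invariant polynomial depending on at most n of the n+1 vector variables. -/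
/-!
A torus element `α` multiplies a monomial of multidegree `D` by the character
`(α₁⋯α_{n-1})^{D₁} ∏ₜ αₜ^{-2 D_{t+1}}`. Over an infinite field this character is trivial iff
`D₁ = 2 D_{t+1}` for every `t`, and since a polynomial is determined by its values, every
monomial of an invariant polynomial is itself invariant.

The points `v` and `v'` differ only in the sign of the coordinate `x(1)₁`, so a monomial takes the
values `(-1)^a c` and `c` at them, where `a` is its exponent of `x(1)₁`. If `c ≠ 0`, the monomial
involves only `x(1)₁` and the `x(j+1)_j`, and for an invariant one of multidegree
`(2d, d, …, d)` omitting the vector `x(1)` forces `a = 0`, omitting `x(2)` forces `a = 2d`, and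
omitting any later vector forces `d = 0`.
-/

open MvPolynomial

/-- The action of the torus `T = (kˣ)^{n-1}` on points of `V^{n+1}` (with `V = kⁿ`):
`(α₁,…,α_{n−1})` scales the `0`-th coordinate of each vector by `α₁⋯α_{n−1}` and the
`j`-th coordinate (`j ≥ 1`) by `α_j⁻²`. A point of `V^{n+1}` is a function
`Fin (n+1) × Fin n → k`. -/
def torusAct {k : Type} [Field k] (n : ℕ) (α : Fin (n - 1) → kˣ)
    (p : Fin (n + 1) × Fin n → k) : Fin (n + 1) × Fin n → k :=
  fun q =>
    (if h : (q.2 : ℕ) = 0 then ∏ t, ((α t : kˣ) : k)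
      else (((α ⟨(q.2 : ℕ) - 1, by have := q.2.isLt; omega⟩ : kˣ) : k))⁻¹ ^ 2) * p q

/-- A polynomial on `V^{n+1}` is a torus invariant. -/
def TorusInvariant {k : Type} [Field k] (n : ℕ)
    (f : MvPolynomial (Fin (n + 1) × Fin n) k) : Prop :=
  ∀ (α : Fin (n - 1) → kˣ) (p : Fin (n + 1) × Fin n → k),
    MvPolynomial.eval (torusAct n α p) f = MvPolynomial.eval p f

/-- The point `v = (−e₁, e₁, e₂, …, e_n)` of `V^{n+1}`. -/
def ptV {k : Type} [Field k] (n : ℕ) : Fin (n + 1) × Fin n → k :=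
  fun q => if (q.1 : ℕ) = 0 then (if (q.2 : ℕ) = 0 then -1 else 0)
    else (if (q.2 : ℕ) + 1 = (q.1 : ℕ) then 1 else 0)

/-- The point `v' = (e₁, e₁, e₂, …, e_n)` of `V^{n+1}`. -/
def ptV' {k : Type} [Field k] (n : ℕ) : Fin (n + 1) × Fin n → k :=
  fun q => if (q.1 : ℕ) = 0 then (if (q.2 : ℕ) = 0 then 1 else 0)
    else (if (q.2 : ℕ) + 1 = (q.1 : ℕ) then 1 else 0)

/-- The invariant monomial `x(1)₁ x(2)₁ x(3)₂ ⋯ x(n+1)_n`. -/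
noncomputable def sepMonomial (k : Type) [Field k] (n : ℕ) (hn : 2 ≤ n) :
    MvPolynomial (Fin (n + 1) × Fin n) k :=
  ∏ i : Fin (n + 1),
    X (i, if _ : (i : ℕ) ≤ 1 then ⟨0, by omega⟩
          else ⟨(i : ℕ) - 1, by have := i.isLt; omega⟩)

namespace MvPolynomial

variable {σ R : Type*}

theorem eval_mul_left_monomial [CommSemiring R] (a p : σ → R) (e : σ →₀ ℕ) (c : R) :
    eval (fun q => a q * p q) (monomial e c) =
      (e.prod fun q n => a q ^ n) * eval p (monomial e c) := by
  simp only [eval_monomial, Finsupp.prod, mul_pow, Finset.prod_mul_distrib]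
  ring

theorem prod_pow_eq_one_of_eval_mul_left_eq [CommRing R] [IsDomain R] [Infinite R] {a : σ → R}
    {f : MvPolynomial σ R} (h : ∀ p, eval (fun q => a q * p q) f = eval p f)
    {e : σ →₀ ℕ} (he : e ∈ f.support) : (e.prod fun q n => a q ^ n) = 1 := by
  set g := ∑ e ∈ f.support, monomial e ((e.prod fun q n => a q ^ n) * coeff e f)
  have hg : g = f := MvPolynomial.funext fun p => by
    rw [← h p]
    conv_rhs => rw [← support_sum_monomial_coeff f]
    simp only [g, map_sum, eval_mul_left_monomial]
    exact Finset.sum_congr rfl fun _ _ => by rw [eval_monomial, eval_monomial]; ring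
  have hcoeff : (e.prod fun q n => a q ^ n) * coeff e f = coeff e f := by
    classical
    simpa [g, coeff_sum, coeff_monomial, he] using congrArg (coeff e) hg
  exact mul_right_cancel₀ (mem_support_iff.mp he) (by rw [hcoeff, one_mul])

end MvPolynomial

theorem eq_zero_of_forall_units_zpow_eq_one {K : Type*} [Field K] [Infinite K] {z : ℤ}
    (h : ∀ a : Kˣ, a ^ z = 1) : z = 0 := by
  by_contra hz
  have hn : 0 < z.natAbs := Int.natAbs_pos.mpr hz
  have hsub : ({0}ᶜ : Set K) ⊆ Polynomial.nthRootsFinset z.natAbs (1 : K) := by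
    intro x hx
    have hx' := h (Units.mk0 x (Set.mem_compl_singleton_iff.mp hx))
    rw [Finset.mem_coe, Polynomial.mem_nthRootsFinset hn]
    rcases Int.natAbs_eq z with hz' | hz'
    · rw [hz', zpow_natCast] at hx'
      simpa using congrArg Units.val hx'
    · rw [hz', zpow_neg, zpow_natCast, inv_eq_one] at hx'
      simpa using congrArg Units.val hx'
  exact (Set.finite_singleton (0 : K)).infinite_compl ((Finset.finite_toSet _).subset hsub)

-- With `n = m + 2`, the torus `Fin (n - 1) → kˣ` is `Fin (m + 1) → kˣ` and coordinate classes
-- split as `0` and `t.succ`.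
section Torus

variable {k : Type} [Field k] {m : ℕ}

def torusWeight (α : Fin (m + 1) → kˣ) (j : Fin (m + 2)) : kˣ :=
  Fin.cases (∏ t, α t) (fun t => (α t)⁻¹ ^ 2) j

@[simp]
theorem torusWeight_zero (α : Fin (m + 1) → kˣ) : torusWeight α 0 = ∏ t, α t := rfl

@[simp]
theorem torusWeight_succ (α : Fin (m + 1) → kˣ) (t : Fin (m + 1)) :
    torusWeight α t.succ = (α t)⁻¹ ^ 2 := rfl

theorem torusAct_eq (α : Fin (m + 1) → kˣ) (p : Fin (m + 3) × Fin (m + 2) → k) :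
    torusAct (m + 2) α p = fun q => torusWeight α q.2 * p q := by
  funext ⟨i, j⟩
  cases j using Fin.cases with
  | zero => simp [torusAct]
  | succ t => simp [torusAct, Fin.val_succ]

def classDeg (e : Fin (m + 3) × Fin (m + 2) →₀ ℕ) (j : Fin (m + 2)) : ℕ := ∑ i, e (i, j)

def IsBalanced (D : Fin (m + 2) → ℕ) : Prop :=
  ∃ d, D 0 = 2 * d ∧ ∀ j : Fin (m + 2), (j : ℕ) ≠ 0 → D j = d

theorem prod_torusWeight_pow (α : Fin (m + 1) → kˣ) (e : Fin (m + 3) × Fin (m + 2) →₀ ℕ) :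
    (e.prod fun q n => (torusWeight α q.2 : k) ^ n) =
      ((∏ j, torusWeight α j ^ classDeg e j : kˣ) : k) := by
  rw [Finsupp.prod_pow, Fintype.prod_prod_type_right]
  push_cast
  simp only [classDeg, Finset.prod_pow_eq_pow_sum]

theorem prod_torusWeight_pow_eq (α : Fin (m + 1) → kˣ) (D : Fin (m + 2) → ℕ) :
    ∏ j, torusWeight α j ^ D j = ∏ t, α t ^ ((D 0 : ℤ) - 2 * D t.succ) := by
  rw [Fin.prod_univ_succ, torusWeight_zero, ← Finset.prod_pow, ← Finset.prod_mul_distrib]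
  refine Finset.prod_congr rfl fun t _ => ?_
  rw [torusWeight_succ, zpow_sub, zpow_natCast, zpow_mul, zpow_natCast, ← pow_mul, inv_pow,
    zpow_ofNat, ← pow_mul]

theorem forall_prod_torusWeight_pow_eq_one_iff [Infinite k] (D : Fin (m + 2) → ℕ) :
    (∀ α : Fin (m + 1) → kˣ, ∏ j, torusWeight α j ^ D j = 1) ↔ IsBalanced D := by
  simp only [prod_torusWeight_pow_eq]
  constructor
  · intro h
    have hD : ∀ t : Fin (m + 1), (D 0 : ℤ) = 2 * D t.succ := fun t =>
      sub_eq_zero.mp <| eq_zero_of_forall_units_zpow_eq_one fun a => by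
        simpa [Pi.mulSingle_apply, apply_ite (· ^ _)] using h (Pi.mulSingle t a)
    refine ⟨D (Fin.succ 0), by exact_mod_cast hD 0, fun j hj => ?_⟩
    obtain ⟨t, rfl⟩ := Fin.exists_succ_eq_of_ne_zero (Fin.val_ne_zero_iff.mp hj)
    have h0 := hD 0
    have ht := hD t
    omega
  · rintro ⟨d, hd0, hd⟩ α
    refine Finset.prod_eq_one fun t _ => ?_
    rw [hd0, hd t.succ (by simp)]
    simp

theorem TorusInvariant.isBalanced [Infinite k] {f : MvPolynomial (Fin (m + 3) × Fin (m + 2)) k}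
    (hf : TorusInvariant (m + 2) f) {e : Fin (m + 3) × Fin (m + 2) →₀ ℕ} (he : e ∈ f.support) :
    IsBalanced (classDeg e) :=
  (forall_prod_torusWeight_pow_eq_one_iff (k := k) _).mp fun α => Units.ext <| by
    have h := prod_pow_eq_one_of_eval_mul_left_eq (a := fun q => (torusWeight α q.2 : k))
      (fun p => by rw [← torusAct_eq]; exact hf α p) he
    rwa [prod_torusWeight_pow] at h

theorem torusInvariant_monomial_iff [Infinite k] {e : Fin (m + 3) × Fin (m + 2) →₀ ℕ} {c : k}
    (hc : c ≠ 0) : TorusInvariant (m + 2) (monomial e c) ↔ IsBalanced (classDeg e) := by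
  refine ⟨fun h => h.isBalanced (by simp [hc]), fun h α p => ?_⟩
  rw [torusAct_eq, eval_mul_left_monomial, prod_torusWeight_pow,
    (forall_prod_torusWeight_pow_eq_one_iff _).mpr h α, Units.val_one, one_mul]

theorem sepMonomial_eq (hn : 2 ≤ m + 2) :
    sepMonomial k (m + 2) hn =
      X (0, 0) * X (1, 0) * ∏ t : Fin (m + 1), X (t.succ.succ, t.succ) := by
  simp [sepMonomial, Fin.prod_univ_succ, Fin.val_succ, mul_assoc]

theorem torusInvariant_sepMonomial (hn : 2 ≤ m + 2) :
    TorusInvariant (m + 2) (sepMonomial k (m + 2) hn) := by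
  intro (α : Fin (m + 1) → kˣ) p
  have hweight : ((∏ t, α t : kˣ) : k) ^ 2 * ∏ t, (((α t)⁻¹ ^ 2 : kˣ) : k) = 1 := by
    rw [← Units.val_pow_eq_pow_val, ← Units.coe_prod, ← Units.val_mul]
    simp [Finset.prod_pow, Finset.prod_inv_distrib]
  simp only [sepMonomial_eq, map_mul, map_prod, eval_X, torusAct_eq, torusWeight_zero,
    torusWeight_succ, Finset.prod_mul_distrib]
  linear_combination (p (0, 0) * p (1, 0) * ∏ t : Fin (m + 1), p (t.succ.succ, t.succ)) * hweight

theorem eval_ptV_sepMonomial (hn : 2 ≤ m + 2) :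
    eval (ptV (m + 2)) (sepMonomial k (m + 2) hn) = -1 := by
  simp [sepMonomial_eq, ptV, Fin.val_succ]

theorem eval_ptV'_sepMonomial (hn : 2 ≤ m + 2) :
    eval (ptV' (m + 2)) (sepMonomial k (m + 2) hn) = 1 := by
  simp [sepMonomial_eq, ptV', Fin.val_succ]

theorem ptV_eq :
    ptV (k := k) (m + 2) = fun q => (if q = (0, 0) then -1 else 1) * ptV' (m + 2) q := by
  funext ⟨i, j⟩
  by_cases hi : i = 0 <;> by_cases hj : j = 0 <;> simp [ptV, ptV', hi, hj]

theorem eval_ptV_monomial (e : Fin (m + 3) × Fin (m + 2) →₀ ℕ) (c : k) :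
    eval (ptV (m + 2)) (monomial e c) = (-1) ^ e (0, 0) * eval (ptV' (m + 2)) (monomial e c) := by
  rw [ptV_eq, eval_mul_left_monomial, Finsupp.prod_pow]
  simp [ite_pow]

theorem eq_zero_or_fst_eq_succ_of_ptV'_ne_zero {q : Fin (m + 3) × Fin (m + 2)}
    (hq : ptV' (k := k) (m + 2) q ≠ 0) : q = (0, 0) ∨ q.1 = q.2.succ := by
  obtain ⟨i, j⟩ := q
  unfold ptV' at hq
  split_ifs at hq with hi hj hij
  · exact Or.inl (Prod.ext (Fin.ext hi) (Fin.ext hj))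
  · exact absurd rfl hq
  · exact Or.inr (Fin.ext (by simpa [Fin.val_succ] using hij.symm))
  · exact absurd rfl hq

variable {e : Fin (m + 3) × Fin (m + 2) →₀ ℕ}

theorem classDeg_eq_of_support (he : ∀ q ∈ e.support, q = (0, 0) ∨ q.1 = q.2.succ)
    (j : Fin (m + 2)) : classDeg e j = e (0, j) + e (j.succ, j) := by
  rw [classDeg, Fin.sum_univ_succ, Finset.sum_eq_single j]
  · intro i _ hij
    by_contra hne
    rcases he _ (Finsupp.mem_support_iff.mpr hne) with h | h
    · simp at h
    · exact hij (Fin.succ_injective _ h)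
  · simp

theorem even_apply_zero_zero (hbal : IsBalanced (classDeg e))
    (he : ∀ q ∈ e.support, q = (0, 0) ∨ q.1 = q.2.succ) {i₀ : Fin (m + 3)}
    (hi₀ : ∀ j, e (i₀, j) = 0) : Even (e (0, 0)) := by
  obtain ⟨d, hd0, hd⟩ := hbal
  have hdeg := classDeg_eq_of_support he
  cases i₀ using Fin.cases with
  | zero => simp [hi₀]
  | succ i =>
    cases i using Fin.cases with
    | zero =>
      have h0 := hdeg 0
      rw [hi₀ 0] at h0
      exact ⟨d, by omega⟩
    | succ j =>
      have h0j : e (0, j.succ) = 0 :=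
        Finsupp.notMem_support_iff.mp fun h =>
          Fin.succ_ne_zero _ (by simpa using he (0, j.succ) h : (0 : Fin (m + 3)) = _).symm
      have hdj := hd j.succ (by simp)
      have hj := hdeg j.succ
      have h0 := hdeg 0
      have hi₀j := hi₀ j.succ
      exact ⟨0, by omega⟩

theorem eval_ptV_monomial_eq (hbal : IsBalanced (classDeg e)) {i₀ : Fin (m + 3)}
    (hi₀ : ∀ j, e (i₀, j) = 0) (c : k) :
    eval (ptV (m + 2)) (monomial e c) = eval (ptV' (m + 2)) (monomial e c) := by
  rw [eval_ptV_monomial]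
  by_cases h : eval (ptV' (m + 2)) (monomial e c) = 0
  · rw [h, mul_zero]
  have he : ∀ q ∈ e.support, q = (0, 0) ∨ q.1 = q.2.succ := fun q hq =>
    eq_zero_or_fst_eq_succ_of_ptV'_ne_zero fun hq0 => h <| by
      rw [eval_monomial, Finsupp.prod, Finset.prod_eq_zero hq, mul_zero]
      rw [hq0, zero_pow (Finsupp.mem_support_iff.mp hq)]
  rw [(even_apply_zero_zero hbal he hi₀).neg_one_pow, one_mul]

theorem TorusInvariant.eval_ptV_eq [Infinite k] {f : MvPolynomial (Fin (m + 3) × Fin (m + 2)) k}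
    (hf : TorusInvariant (m + 2) f) {S : Finset (Fin (m + 3))} (hS : S.card ≤ m + 2)
    (hfS : f ∈ supported k {q | q.1 ∈ S}) : eval (ptV (m + 2)) f = eval (ptV' (m + 2)) f := by
  obtain ⟨i₀, -, hi₀⟩ := Finset.exists_mem_notMem_of_card_lt_card (s := S) (t := Finset.univ)
    (by rw [Finset.card_univ, Fintype.card_fin]; omega)
  rw [← support_sum_monomial_coeff f, map_sum, map_sum]
  refine Finset.sum_congr rfl fun e he =>
    eval_ptV_monomial_eq (i₀ := i₀) (hf.isBalanced he) (fun j => ?_) _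
  by_contra hne
  exact hi₀ (mem_supported.mp hfS ((mem_vars_iff_mem_support _).mpr
    ⟨e, he, Finsupp.mem_support_iff.mpr hne⟩))

end Torus

/-- For the torus `(kˣ)^{n−1}` acting on `V^{n+1}` (`char k ≠ 2`): (i) a monomial is an
invariant iff its multidegree is of the form `(2d, d, …, d)`; (ii) the points
`v = (−e₁, e₁, …, e_n)` and `v' = (e₁, e₁, …, e_n)` are separated by the invariant
monomial `x(1)₁x(2)₁x(3)₂⋯x(n+1)_n`; (iii) `v` and `v'` cannot be separated by any
invariant polynomial depending on at most `n` of the `n+1` vector variables. -/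
theorem torus_example_typical_bound_sharp
    {k : Type} [Field k] [IsAlgClosed k] (hchar : (2 : k) ≠ 0)
    (n : ℕ) (hn : 2 ≤ n) :
    (∀ (e : Fin (n + 1) × Fin n →₀ ℕ) (c : k), c ≠ 0 →
      (TorusInvariant n (MvPolynomial.monomial e c) ↔
        ∃ dd : ℕ, (∑ i : Fin (n + 1), e (i, ⟨0, by omega⟩)) = 2 * dd ∧
          ∀ j : Fin n, (j : ℕ) ≠ 0 → (∑ i : Fin (n + 1), e (i, j)) = dd)) ∧
    (TorusInvariant n (sepMonomial k n hn) ∧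
      MvPolynomial.eval (ptV n) (sepMonomial k n hn) ≠
        MvPolynomial.eval (ptV' n) (sepMonomial k n hn)) ∧
    (∀ f : MvPolynomial (Fin (n + 1) × Fin n) k, TorusInvariant n f →
      ∀ S : Finset (Fin (n + 1)), S.card ≤ n →
        f ∈ MvPolynomial.supported k {q : Fin (n + 1) × Fin n | q.1 ∈ S} →
        MvPolynomial.eval (ptV n) f = MvPolynomial.eval (ptV' n) f) := by
  obtain ⟨m, rfl⟩ : ∃ m, n = m + 2 := ⟨n - 2, by omega⟩
  refine ⟨fun e c hc => torusInvariant_monomial_iff hc, ⟨torusInvariant_sepMonomial hn, ?_⟩,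
    fun f hf S hS hfS => hf.eval_ptV_eq hS hfS⟩
  rw [eval_ptV_sepMonomial, eval_ptV'_sepMonomial]
  intro h
  exact hchar (by linear_combination -h)
end
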